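/- arXiv:math/9907207 — 6 statements merged into one kernel-verified Lean document; each statement's English description precedes it below -/
import Mathlib

section
/- Let T > 1 and r ≤ 0 be real numbers. Then the differentiation map f ↦ f' is a linear bijection from S_r to S_r; in particular the two-term complex S_r → S_r given by differentiation is exact (both its cohomology groups vanish). -/
open MeasureTheory Set Filter
open scoped ENNReal NNReal

/-- `Sspace T r f` : `f` is smooth on `(T, ∞)` and for every pair of natural numbers
`l, m` the function `s ↦ exp(-r s) * s ^ m * f⁽ˡ⁾(s)` is in `L²((T, ∞))`. -/
def Sspace (T r : ℝ) (f : ℝ → ℂ) : Prop :=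
  ContDiffOn ℝ (⊤ : ℕ∞) f (Set.Ioi T) ∧
  ∀ l m : ℕ,
    MemLp (fun s : ℝ => (Real.exp (-(r * s)) * s ^ m) • iteratedDerivWithin l f (Set.Ioi T) s)
      2 (volume.restrict (Set.Ioi T))

/- ### Auxiliary lemmas -/

lemma rpow_two_eq (x : ℝ) : x ^ (2:ℝ) = x ^ 2 := by
  rw [show (2:ℝ) = ((2:ℕ):ℝ) by norm_num, Real.rpow_natCast]

section Estimates

variable {T r : ℝ} {g : ℝ → ℂ}

lemma weight_one_le (hT : 1 < T) (hr : r ≤ 0) {s : ℝ} (hs : s ∈ Ioi T) (m : ℕ) :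
    1 ≤ Real.exp (-(r*s)) * s^m := by
  have hs1 : 1 < s := hT.trans hs
  have h1 : 1 ≤ Real.exp (-(r*s)) := Real.one_le_exp (by nlinarith)
  have h2 : (1:ℝ) ≤ s^m := one_le_pow₀ hs1.le
  nlinarith

lemma weight_cancel {t : ℝ} (ht : 0 < t) (m : ℕ) :
    (Real.exp (r*t) * t ^ (-((m:ℝ)+2))) * (Real.exp (-(r*t)) * t^(m+2)) = 1 := by
  have h1 : Real.exp (r*t) * Real.exp (-(r*t)) = 1 := by rw [← Real.exp_add]; simp
  have h2 : t ^ (-((m:ℝ)+2)) * t^(m+2) = 1 := by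
    rw [← Real.rpow_natCast t (m+2), ← Real.rpow_add ht,
      show -((m:ℝ)+2) + ((m+2:ℕ):ℝ) = 0 by push_cast; ring, Real.rpow_zero]
  calc (Real.exp (r*t) * t ^ (-((m:ℝ)+2))) * (Real.exp (-(r*t)) * t^(m+2))
      = (Real.exp (r*t) * Real.exp (-(r*t))) * (t ^ (-((m:ℝ)+2)) * t^(m+2)) := by ring
    _ = 1 := by rw [h1, h2, mul_one]

lemma Sspace.memL2 (hg : Sspace T r g) (m : ℕ) :
    MemLp (fun s => (Real.exp (-(r*s)) * s^m) • g s) 2 (volume.restrict (Ioi T)) := by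
  have := hg.2 0 m
  simpa [iteratedDerivWithin_zero] using this

/-- The auxiliary weight `exp (r t) * t ^ (-(m+2))` is in `L²((c,∞))` for `c > 0`, `r ≤ 0`. -/
lemma memL2_phi {c : ℝ} (hc : 0 < c) (hr : r ≤ 0) (m : ℕ) :
    MemLp (fun t => Real.exp (r*t) * t ^ (-((m:ℝ)+2))) 2 (volume.restrict (Ioi c)) := by
  have hcont : ContinuousOn (fun t : ℝ => Real.exp (r*t) * t ^ (-((m:ℝ)+2))) (Ioi c) := by
    apply ContinuousOn.mul
    · exact (Real.continuous_exp.comp (continuous_const.mul continuous_id)).continuousOn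
    · exact ContinuousOn.rpow_const continuousOn_id fun t ht => Or.inl (ne_of_gt (hc.trans ht))
  have haesm : AEStronglyMeasurable (fun t : ℝ => Real.exp (r*t) * t ^ (-((m:ℝ)+2)))
      (volume.restrict (Ioi c)) := hcont.aestronglyMeasurable measurableSet_Ioi
  rw [memLp_two_iff_integrable_sq haesm]
  apply Integrable.mono' (g := fun t => t ^ (-(2*(m:ℝ)+4)))
    (integrableOn_Ioi_rpow_of_lt (by nlinarith [Nat.cast_nonneg (α := ℝ) m]) hc)
  · exact (haesm.mul haesm).congr (by simp [sq]; rfl)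
  · filter_upwards [ae_restrict_mem measurableSet_Ioi] with t ht
    have ht0 : 0 < t := hc.trans ht
    have hexp : Real.exp (r*t) ≤ 1 := Real.exp_le_one_iff.mpr (by nlinarith)
    have hnn : 0 ≤ Real.exp (r*t) * t ^ (-((m:ℝ)+2)) := by positivity
    rw [Real.norm_eq_abs, abs_of_nonneg (by positivity)]
    have h1 : (Real.exp (r*t) * t ^ (-((m:ℝ)+2)))^2
        = Real.exp (r*t)^2 * (t ^ (-((m:ℝ)+2)))^2 := by ring
    have h2 : (t ^ (-((m:ℝ)+2)))^2 = t ^ (-(2*(m:ℝ)+4)) := by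
      rw [← Real.rpow_natCast (t ^ (-((m:ℝ)+2))) 2, ← Real.rpow_mul ht0.le]
      norm_num; ring_nf
    rw [h1, h2]
    have hsq : Real.exp (r*t)^2 ≤ 1 := by nlinarith [Real.exp_nonneg (r*t)]
    nlinarith [Real.rpow_nonneg ht0.le (-(2*(m:ℝ)+4))]

lemma Sspace.integrableOn (hT : 1 < T) (hr : r ≤ 0) (hg : Sspace T r g) :
    IntegrableOn g (Ioi T) := by
  have hT0 : (0:ℝ) < T := lt_trans one_pos hT
  have hφ := memL2_phi hT0 hr 0
  have hψ := hg.memL2 (0+2)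
  have h2 : MemLp ((fun t => Real.exp (r*t) * t ^ (-(((0:ℕ):ℝ))-2)) •
      (fun t => (Real.exp (-(r*t)) * t^(0+2)) • g t)) 1 (volume.restrict (Ioi T)) := by
    apply MemLp.smul (p := 2) (q := 2) hψ ?_
      (hpqr := ⟨by simp only [inv_one]; exact ENNReal.inv_two_add_inv_two⟩)
    · convert hφ using 2 with t
      norm_num
  rw [memLp_one_iff_integrable] at h2
  apply h2.congr
  filter_upwards [ae_restrict_mem measurableSet_Ioi] with t ht
  have ht0 : 0 < t := hT0.trans ht
  have := weight_cancel (r := r) ht0 0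
  simp only [Pi.smul_apply', smul_smul]
  rw [show (-(((0:ℕ):ℝ))-2) = -(((0:ℕ):ℝ)+2) by norm_num, this, one_smul]

/-- The key tail estimate. -/
lemma Sspace.tail_bound (hT : 1 < T) (hr : r ≤ 0) (hg : Sspace T r g) (m : ℕ) :
    ∃ B : ℝ, 0 ≤ B ∧ ∀ s ∈ Ioi T,
      (∫ t in Ioi s, ‖g t‖) ≤ (Real.exp (r*s) * s ^ (-(m:ℝ)-3/2)) * B := by
  have hT0 : (0:ℝ) < T := lt_trans one_pos hT
  set ψ : ℝ → ℂ := fun t => (Real.exp (-(r*t)) * t^(m+2)) • g t with hψdef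
  have hψ : MemLp ψ 2 (volume.restrict (Ioi T)) := hg.memL2 (m+2)
  have hψsqInt : Integrable (fun t => ‖ψ t‖^2) (volume.restrict (Ioi T)) :=
    (memLp_two_iff_integrable_sq_norm hψ.1).mp hψ
  refine ⟨(∫ t in Ioi T, ‖ψ t‖^2) ^ ((1:ℝ)/2),
    Real.rpow_nonneg (integral_nonneg fun t => sq_nonneg _) _, fun s hs => ?_⟩
  have hTs : T < s := hs
  have hs0 : (0:ℝ) < s := hT0.trans hTs
  set φ : ℝ → ℝ := fun t => Real.exp (r*t) * t ^ (-((m:ℝ)+2)) with hφdef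
  have hφ : MemLp φ 2 (volume.restrict (Ioi s)) := memL2_phi hs0 hr m
  have hψs : MemLp ψ 2 (volume.restrict (Ioi s)) :=
    hψ.mono_measure (Measure.restrict_mono (Ioi_subset_Ioi hTs.le) le_rfl)
  -- Hölder
  have hconj : Real.HolderConjugate 2 2 := Real.HolderConjugate.two_two
  have hof : ((2:ℝ≥0∞)) = ENNReal.ofReal 2 := by simp
  have hφ2 : MemLp φ (ENNReal.ofReal 2) (volume.restrict (Ioi s)) := by
    rw [← hof]; exact hφ
  have hψ2 : MemLp (fun t => ‖ψ t‖) (ENNReal.ofReal 2) (volume.restrict (Ioi s)) := by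
    rw [← hof]; exact hψs.norm
  have hHolder := integral_mul_norm_le_Lp_mul_Lq (μ := volume.restrict (Ioi s)) hconj hφ2 hψ2
  -- convert rpow to pow
  simp only [rpow_two_eq, norm_norm] at hHolder
  -- LHS equals ∫ ‖g‖
  have hLHS : (∫ t in Ioi s, ‖g t‖) = ∫ t in Ioi s, ‖φ t‖ * ‖ψ t‖ := by
    apply setIntegral_congr_fun measurableSet_Ioi
    intro t ht
    have ht0 : 0 < t := hs0.trans ht
    show ‖g t‖ = ‖φ t‖ * ‖ψ t‖
    rw [← norm_smul]
    simp only [hψdef, hφdef, smul_smul]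
    rw [weight_cancel ht0 m, one_smul]
  -- bound on the first factor
  have hfact1 : (∫ t in Ioi s, ‖φ t‖^2) ≤ Real.exp (r*s)^2 * s ^ (-(2*(m:ℝ)+3)) := by
    have hmaj : ∀ t ∈ Ioi s, ‖φ t‖^2 ≤ Real.exp (r*s)^2 * t ^ (-(2*(m:ℝ)+4)) := by
      intro t ht
      have hts : s < t := ht
      have ht0 : 0 < t := hs0.trans hts
      have hexp : Real.exp (r*t) ≤ Real.exp (r*s) := Real.exp_le_exp.mpr (by nlinarith)
      have h2 : (t ^ (-((m:ℝ)+2)))^2 = t ^ (-(2*(m:ℝ)+4)) := by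
        rw [← Real.rpow_natCast (t ^ (-((m:ℝ)+2))) 2, ← Real.rpow_mul ht0.le]
        norm_num; ring_nf
      rw [Real.norm_eq_abs, abs_of_nonneg (by positivity), hφdef]
      have : (Real.exp (r*t) * t ^ (-((m:ℝ)+2)))^2
          = Real.exp (r*t)^2 * (t ^ (-((m:ℝ)+2)))^2 := by ring
      rw [this, h2]
      have hsq : Real.exp (r*t)^2 ≤ Real.exp (r*s)^2 := by
        nlinarith [Real.exp_nonneg (r*t), Real.exp_nonneg (r*s)]
      nlinarith [Real.rpow_nonneg ht0.le (-(2*(m:ℝ)+4))]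
    have hint1 : IntegrableOn (fun t => ‖φ t‖^2) (Ioi s) := by
      have := (memLp_two_iff_integrable_sq_norm hφ.1).mp hφ
      exact this
    have hint2 : IntegrableOn (fun t => Real.exp (r*s)^2 * t ^ (-(2*(m:ℝ)+4))) (Ioi s) :=
      (integrableOn_Ioi_rpow_of_lt (by nlinarith [Nat.cast_nonneg (α := ℝ) m]) hs0).const_mul _
    calc (∫ t in Ioi s, ‖φ t‖^2)
        ≤ ∫ t in Ioi s, Real.exp (r*s)^2 * t ^ (-(2*(m:ℝ)+4)) :=
          setIntegral_mono_on hint1 hint2 measurableSet_Ioi hmaj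
      _ = Real.exp (r*s)^2 * ∫ t in Ioi s, t ^ (-(2*(m:ℝ)+4)) := by
          rw [integral_const_mul]
      _ = Real.exp (r*s)^2 * (-s ^ (-(2*(m:ℝ)+4)+1) / (-(2*(m:ℝ)+4)+1)) := by
          rw [integral_Ioi_rpow_of_lt (by nlinarith [Nat.cast_nonneg (α := ℝ) m]) hs0]
      _ = Real.exp (r*s)^2 * (s ^ (-(2*(m:ℝ)+3)) / (2*(m:ℝ)+3)) := by
          rw [show (-(2*(m:ℝ)+4)+1) = -(2*(m:ℝ)+3) by ring]
          rw [neg_div, div_neg, neg_neg]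
      _ ≤ Real.exp (r*s)^2 * s ^ (-(2*(m:ℝ)+3)) := by
          apply mul_le_mul_of_nonneg_left ?_ (sq_nonneg _)
          apply div_le_self (Real.rpow_nonneg hs0.le _)
          nlinarith [Nat.cast_nonneg (α := ℝ) m]
  -- bound on the second factor
  have hfact2 : (∫ t in Ioi s, ‖ψ t‖^2) ≤ ∫ t in Ioi T, ‖ψ t‖^2 := by
    apply integral_mono_measure (Measure.restrict_mono (Ioi_subset_Ioi hTs.le) le_rfl)
    · filter_upwards with t using sq_nonneg _
    · exact hψsqInt
  -- put everything together
  have hnn1 : (0:ℝ) ≤ ∫ t in Ioi s, ‖φ t‖^2 := integral_nonneg fun t => sq_nonneg _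
  have hnn2 : (0:ℝ) ≤ ∫ t in Ioi s, ‖ψ t‖^2 := integral_nonneg fun t => sq_nonneg _
  have hr1 : (∫ t in Ioi s, ‖φ t‖^2) ^ ((1:ℝ)/2)
      ≤ Real.exp (r*s) * s ^ (-(m:ℝ)-3/2) := by
    have := Real.rpow_le_rpow hnn1 hfact1 (by norm_num : (0:ℝ) ≤ 1/2)
    apply this.trans_eq
    rw [Real.mul_rpow (sq_nonneg _) (Real.rpow_nonneg hs0.le _)]
    congr 1
    · rw [← Real.rpow_natCast (Real.exp (r*s)) 2, ← Real.rpow_mul (Real.exp_nonneg _)]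
      norm_num
    · rw [← Real.rpow_mul hs0.le]
      congr 1
      ring
  have hr2 : (∫ t in Ioi s, ‖ψ t‖^2) ^ ((1:ℝ)/2)
      ≤ (∫ t in Ioi T, ‖ψ t‖^2) ^ ((1:ℝ)/2) :=
    Real.rpow_le_rpow hnn2 hfact2 (by norm_num)
  calc (∫ t in Ioi s, ‖g t‖) = ∫ t in Ioi s, ‖φ t‖ * ‖ψ t‖ := hLHS
    _ ≤ (∫ t in Ioi s, ‖φ t‖^2) ^ ((1:ℝ)/2) * (∫ t in Ioi s, ‖ψ t‖^2) ^ ((1:ℝ)/2) := hHolder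
    _ ≤ (Real.exp (r*s) * s ^ (-(m:ℝ)-3/2)) * ((∫ t in Ioi T, ‖ψ t‖^2) ^ ((1:ℝ)/2)) := by
        apply mul_le_mul hr1 hr2 (Real.rpow_nonneg hnn2 _) (by positivity)

end Estimates

theorem stmt1 (T r : ℝ) (hT : 1 < T) (hr : r ≤ 0) :
    (∀ f : ℝ → ℂ, Sspace T r f → Sspace T r (fun s => derivWithin f (Set.Ioi T) s)) ∧
    (∀ g : ℝ → ℂ, Sspace T r g →
      ∃ f : ℝ → ℂ, Sspace T r f ∧
        Set.EqOn (fun s => derivWithin f (Set.Ioi T) s) g (Set.Ioi T)) ∧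
    (∀ f g : ℝ → ℂ, Sspace T r f → Sspace T r g →
      Set.EqOn (fun s => derivWithin f (Set.Ioi T) s)
        (fun s => derivWithin g (Set.Ioi T) s) (Set.Ioi T) →
      Set.EqOn f g (Set.Ioi T)) := by
  have hT0 : (0:ℝ) < T := lt_trans one_pos hT
  have hUD : UniqueDiffOn ℝ (Ioi T) := uniqueDiffOn_Ioi T
  refine ⟨?_, ?_, ?_⟩
  · -- Part 1: differentiation maps S into S
    intro f hf
    refine ⟨hf.1.derivWithin hUD (by simp), fun l m => ?_⟩
    apply MemLp.ae_eq ?_ (hf.2 (l+1) m)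
    filter_upwards [ae_restrict_mem measurableSet_Ioi] with s hs
    rw [iteratedDerivWithin_succ']
  · -- Part 2: surjectivity
    intro g hg
    have hgc : ContinuousOn g (Ioi T) := hg.1.continuousOn
    have hInt : IntegrableOn g (Ioi T) := hg.integrableOn hT hr
    set C : ℂ := ∫ t in Ioi T, g t with hC
    set f : ℝ → ℂ := fun u => -(∫ t in Ioi u, g t) with hfdef
    have hsplit : ∀ u ∈ Ioi T, f u = (∫ t in T..u, g t) - C := by
      intro u hu
      have hunion : Ioc T u ∪ Ioi u = Ioi T := Ioc_union_Ioi_eq_Ioi (le_of_lt hu)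
      have hsum := setIntegral_union (μ := volume) (f := g) (Ioc_disjoint_Ioi le_rfl)
        measurableSet_Ioi (hInt.mono_set Ioc_subset_Ioi_self)
        (hInt.mono_set (Ioi_subset_Ioi (le_of_lt hu)))
      rw [hunion] at hsum
      rw [hfdef, intervalIntegral.integral_of_le (le_of_lt hu), hC]
      simp only
      rw [hsum]
      ring
    have hDer : ∀ s ∈ Ioi T, HasDerivAt f (g s) s := by
      intro s hs
      have hii : IntervalIntegrable g volume T s :=
        (intervalIntegrable_iff_integrableOn_Ioc_of_le (le_of_lt hs)).mpr
          (hInt.mono_set Ioc_subset_Ioi_self)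
      have hmeas : StronglyMeasurableAtFilter g (nhds s) volume :=
        ⟨Ioi T, isOpen_Ioi.mem_nhds hs, hgc.aestronglyMeasurable measurableSet_Ioi⟩
      have hcont : ContinuousAt g s := hgc.continuousAt (isOpen_Ioi.mem_nhds hs)
      have h1 : HasDerivAt (fun u => (∫ t in T..u, g t) - C) (g s) s :=
        (intervalIntegral.integral_hasDerivAt_right hii hmeas hcont).sub_const C
      apply h1.congr_of_eventuallyEq
      filter_upwards [isOpen_Ioi.mem_nhds hs] with u hu using hsplit u hu
    have hEq : EqOn (fun s => derivWithin f (Ioi T) s) g (Ioi T) := by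
      intro s hs
      show derivWithin f (Ioi T) s = g s
      rw [derivWithin_of_isOpen isOpen_Ioi hs]
      exact (hDer s hs).deriv
    have hAnalytic : ContDiffOn ℝ (⊤ : ℕ∞) f (Ioi T) := by
      rw [contDiffOn_infty_iff_deriv_of_isOpen isOpen_Ioi]
      exact ⟨fun x hx => (hDer x hx).differentiableAt.differentiableWithinAt,
        hg.1.congr fun x hx => (hDer x hx).deriv⟩
    have hfc : ContinuousOn f (Ioi T) := fun s hs =>
      ((hDer s hs).continuousAt).continuousWithinAt
    refine ⟨f, ⟨hAnalytic, fun l m => ?_⟩, hEq⟩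
    cases l with
    | succ k =>
      apply MemLp.ae_eq ?_ (hg.2 k m)
      filter_upwards [ae_restrict_mem measurableSet_Ioi] with s hs
      congr 1
      rw [iteratedDerivWithin_succ']
      exact (iteratedDerivWithin_congr hEq hs).symm
    | zero =>
      simp only [iteratedDerivWithin_zero, pow_zero, mul_one]
      obtain ⟨B, hB, hbound⟩ := hg.tail_bound hT hr m
      have hmaj : ∀ s ∈ Ioi T, ‖(Real.exp (-(r*s)) * s^m) • f s‖ ≤ B * s ^ (-(3:ℝ)/2) := by
        intro s hs
        have hs1 : 1 < s := hT.trans hs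
        have hs0 : (0:ℝ) < s := lt_trans one_pos hs1
        rw [norm_smul, Real.norm_eq_abs,
          abs_of_pos (lt_of_lt_of_le one_pos (weight_one_le hT hr hs m))]
        have h1 : ‖f s‖ ≤ (Real.exp (r*s) * s ^ (-(m:ℝ)-3/2)) * B := by
          rw [hfdef]
          calc ‖-(∫ t in Ioi s, g t)‖ = ‖∫ t in Ioi s, g t‖ := norm_neg _
            _ ≤ ∫ t in Ioi s, ‖g t‖ := norm_integral_le_integral_norm _
            _ ≤ _ := hbound s hs
        calc (Real.exp (-(r*s)) * s^m) * ‖f s‖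
            ≤ (Real.exp (-(r*s)) * s^m) * ((Real.exp (r*s) * s ^ (-(m:ℝ)-3/2)) * B) := by
              apply mul_le_mul_of_nonneg_left h1 (by positivity)
          _ = (B * (s^m * s ^ (-(m:ℝ)-3/2))) * (Real.exp (-(r*s)) * Real.exp (r*s)) := by
              ring
          _ = B * s ^ (-(3:ℝ)/2) := by
              rw [← Real.exp_add, show -(r*s) + r*s = 0 by ring, Real.exp_zero, mul_one,
                ← Real.rpow_natCast s m, ← Real.rpow_add hs0,
                show (m:ℝ) + (-(m:ℝ)-3/2) = -(3:ℝ)/2 by ring]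
      have hwcont : Continuous fun s : ℝ => Real.exp (-(r*s)) * s^m := by continuity
      have haesm : AEStronglyMeasurable (fun s => (Real.exp (-(r*s)) * s^m) • f s)
          (volume.restrict (Ioi T)) :=
        (hwcont.continuousOn.smul hfc).aestronglyMeasurable measurableSet_Ioi
      have hmcont : ContinuousOn (fun s : ℝ => B * s ^ (-(3:ℝ)/2)) (Ioi T) :=
        continuousOn_const.mul (ContinuousOn.rpow_const continuousOn_id
          fun t ht => Or.inl (ne_of_gt (hT0.trans ht)))
      have hmaesm : AEStronglyMeasurable (fun s : ℝ => B * s ^ (-(3:ℝ)/2))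
          (volume.restrict (Ioi T)) := hmcont.aestronglyMeasurable measurableSet_Ioi
      have hmajmem : MemLp (fun s : ℝ => B * s ^ (-(3:ℝ)/2)) 2 (volume.restrict (Ioi T)) := by
        rw [memLp_two_iff_integrable_sq hmaesm]
        apply Integrable.mono' (g := fun s => B^2 * s ^ (-(3:ℝ)))
          ((integrableOn_Ioi_rpow_of_lt (by norm_num) hT0).const_mul _)
          ((hmaesm.mul hmaesm).congr
            (Filter.EventuallyEq.of_eq (funext fun x => (pow_two _).symm)))
        filter_upwards [ae_restrict_mem measurableSet_Ioi] with s hs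
        have hs0 : (0:ℝ) < s := hT0.trans hs
        rw [Real.norm_eq_abs, abs_of_nonneg (sq_nonneg _)]
        have h2 : (s ^ (-(3:ℝ)/2))^2 = s ^ (-(3:ℝ)) := by
          rw [← Real.rpow_natCast (s ^ (-(3:ℝ)/2)) 2, ← Real.rpow_mul hs0.le]
          norm_num
        calc (B * s ^ (-(3:ℝ)/2))^2 = B^2 * (s ^ (-(3:ℝ)/2))^2 := by ring
          _ ≤ B^2 * s^(-(3:ℝ)) := by rw [h2]
      apply MemLp.of_le hmajmem haesm
      filter_upwards [ae_restrict_mem measurableSet_Ioi] with s hs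
      refine (hmaj s hs).trans ?_
      rw [Real.norm_eq_abs]
      exact le_abs_self _
  · -- Part 3: injectivity
    intro f g hf hg hEq x hx
    set x₀ : ℝ := T + 1 with hx₀def
    have hx₀ : x₀ ∈ Ioi T := by simp [hx₀def]
    have hdiff_f : DifferentiableOn ℝ f (Ioi T) := hf.1.differentiableOn (by simp)
    have hdiff_g : DifferentiableOn ℝ g (Ioi T) := hg.1.differentiableOn (by simp)
    have hconst : ∀ y ∈ Ioi T, f y - g y = f x₀ - g x₀ := by
      intro y hy
      apply (convex_Ioi T).is_const_of_fderivWithin_eq_zero (𝕜 := ℝ)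
        (f := fun z => f z - g z) (hdiff_f.sub hdiff_g) ?_ hy hx₀
      intro z hz
      have h1 : HasDerivWithinAt f (derivWithin f (Ioi T) z) (Ioi T) z :=
        (hdiff_f z hz).hasDerivWithinAt
      have h2 : HasDerivWithinAt g (derivWithin g (Ioi T) z) (Ioi T) z :=
        (hdiff_g z hz).hasDerivWithinAt
      have h3 := h1.sub h2
      rw [show derivWithin f (Ioi T) z = derivWithin g (Ioi T) z from hEq hz, sub_self] at h3
      have hz0 : ContinuousLinearMap.smulRight (1 : ℝ →L[ℝ] ℝ) (0:ℂ) = 0 := by ext; simp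
      have h4 : HasFDerivWithinAt (fun z => f z - g z) (0 : ℝ →L[ℝ] ℂ) (Ioi T) z :=
        hz0 ▸ h3.hasFDerivWithinAt
      exact h4.fderivWithin (hUD z hz)
    have hc0 : f x₀ - g x₀ = 0 := by
      by_contra hc
      have hmf := hf.2 0 0
      have hmg := hg.2 0 0
      simp only [iteratedDerivWithin_zero, pow_zero, mul_one] at hmf hmg
      have hsub := hmf.sub hmg
      have hmem : MemLp (fun _ : ℝ => f x₀ - g x₀) 2 (volume.restrict (Ioi T)) := by
        apply MemLp.of_le hsub aestronglyMeasurable_const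
        filter_upwards [ae_restrict_mem measurableSet_Ioi] with s hs
        have hs0 : (0:ℝ) < s := hT0.trans hs
        have hw : 1 ≤ Real.exp (-(r*s)) := Real.one_le_exp (by nlinarith)
        simp only [Pi.sub_apply]
        rw [← smul_sub, hconst s hs, norm_smul, Real.norm_eq_abs,
          abs_of_pos (lt_of_lt_of_le one_pos hw)]
        nlinarith [norm_nonneg (f x₀ - g x₀)]
      have hμne : (volume.restrict (Ioi T) : Measure ℝ) ≠ 0 := by
        intro h0
        have h1 : (volume.restrict (Ioi T)) univ = 0 := by rw [h0]; simp
        rw [Measure.restrict_apply_univ, Real.volume_Ioi] at h1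
        exact ENNReal.top_ne_zero h1
      have hlt := hmem.2
      rw [eLpNorm_const _ (by norm_num) hμne, Measure.restrict_apply_univ,
        Real.volume_Ioi, ENNReal.top_rpow_of_pos (by norm_num),
        ENNReal.mul_top (by simpa using hc)] at hlt
      exact absurd hlt (lt_irrefl ⊤)
    have h5 := hconst x hx
    rw [hc0] at h5
    exact sub_eq_zero.mp h5
end

section
/- Let T > 1 and r ≤ 0 be real numbers, and let f ∈ S_r. Then for every s > T the integral ∫_s^∞ f(u) du converges absolutely, and the function If defined by If(s) = -∫_s^∞ f(u) du is smooth on (T, ∞), satisfies (If)' = f on (T, ∞), and belongs to S_r. -/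
open MeasureTheory Set

private lemma memLp_rpow {a c : ℝ} (hc : 0 < c) (ha : 2 * a < -1) :
    MemLp (fun s : ℝ => s ^ a) 2 (volume.restrict (Ioi c)) := by
  have hcont : ContinuousOn (fun s : ℝ => s ^ a) (Ioi c) :=
    ContinuousOn.rpow_const continuousOn_id (fun x hx => Or.inl (ne_of_gt (hc.trans hx)))
  have hmeas : AEStronglyMeasurable (fun s : ℝ => s ^ a) (volume.restrict (Ioi c)) :=
    hcont.aestronglyMeasurable measurableSet_Ioi
  rw [memLp_two_iff_integrable_sq hmeas]
  have hint : IntegrableOn (fun s : ℝ => s ^ (a * 2)) (Ioi c) :=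
    integrableOn_Ioi_rpow_of_lt (by linarith) hc
  apply hint.congr_fun ?_ measurableSet_Ioi
  intro x hx
  show x ^ (a * 2) = (x ^ a) ^ (2:ℕ)
  rw [show x ^ (a * 2) = x ^ (a * ((2:ℕ):ℝ)) by norm_num,
    Real.rpow_mul (le_of_lt (hc.trans hx)), Real.rpow_natCast]

private lemma memLp_zero_case (T r : ℝ) (hT : 1 < T) (hr : r ≤ 0) (f : ℝ → ℂ)
    (hfL2 : ∀ k : ℕ, MemLp (fun s => (Real.exp (-(r*s)) * s^k) • f s) 2 (volume.restrict (Ioi T)))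
    (hint : IntegrableOn f (Ioi T))
    (hIfc : ContinuousOn (fun s => -∫ u in Ioi s, f u) (Ioi T)) (m : ℕ) :
    MemLp (fun s : ℝ => (Real.exp (-(r * s)) * s ^ m) • (-∫ u in Ioi s, f u))
      2 (volume.restrict (Ioi T)) := by
  have hT0 : (0:ℝ) < T := lt_trans one_pos hT
  set k : ℕ := m + 2 with hk
  set G : ℝ → ℝ := fun u => ‖(Real.exp (-(r*u)) * u^k) • f u‖ with hGdef
  have hG : MemLp G 2 (volume.restrict (Ioi T)) := (hfL2 k).norm
  have hGnonneg : ∀ u, 0 ≤ G u := fun u => norm_nonneg _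
  have hGsq : IntegrableOn (fun u => G u ^ (2:ℝ)) (Ioi T) := by
    have h2 := hG.integrable_sq
    have : (fun u => G u ^ (2:ℝ)) = fun u => G u ^ (2:ℕ) := by
      funext u; rw [show (2:ℝ) = ((2:ℕ):ℝ) by norm_num, Real.rpow_natCast]
    rw [this]
    exact h2
  set A : ℝ := (∫ u in Ioi T, G u ^ (2:ℝ)) ^ (1/(2:ℝ)) with hA
  have hA0 : 0 ≤ A :=
    Real.rpow_nonneg (integral_nonneg (fun u => Real.rpow_nonneg (hGnonneg u) _)) _
  have hke : (2:ℝ) ≤ (k:ℝ) := by exact_mod_cast Nat.le_add_left 2 m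
  -- pointwise bound
  have hbound : ∀ s ∈ Ioi T, ‖(Real.exp (-(r * s)) * s ^ m) • (-∫ u in Ioi s, f u)‖
      ≤ A * s ^ (-(3:ℝ)/2) := by
    intro s hs
    have hs0 : (0:ℝ) < s := hT0.trans hs
    set φ : ℝ → ℝ := fun u => u ^ (-(k:ℝ)) with hφdef
    have hφmem : MemLp φ 2 (volume.restrict (Ioi s)) := memLp_rpow hs0 (by linarith)
    have hGs : MemLp G 2 (volume.restrict (Ioi s)) :=
      hG.mono_measure (Measure.restrict_mono (Ioi_subset_Ioi hs.le) le_rfl)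
    have hprod_int : IntegrableOn (fun u => φ u * G u) (Ioi s) := by
      rw [IntegrableOn, ← memLp_one_iff_integrable]
      have hsm : MemLp (φ • G) 1 (volume.restrict (Ioi s)) := hGs.smul hφmem
      exact hsm
    have hfnorm_int : IntegrableOn (fun u => ‖f u‖) (Ioi s) :=
      (hint.mono_set (Ioi_subset_Ioi hs.le)).norm
    have step1 : ‖-∫ u in Ioi s, f u‖ ≤ ∫ u in Ioi s, ‖f u‖ := by
      rw [norm_neg]; exact norm_integral_le_integral_norm f
    have step2 : ∫ u in Ioi s, ‖f u‖ ≤ Real.exp (r*s) * ∫ u in Ioi s, φ u * G u := by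
      have hconst : Real.exp (r*s) * (∫ u in Ioi s, φ u * G u)
          = ∫ u in Ioi s, Real.exp (r*s) * (φ u * G u) := by
        rw [← smul_eq_mul, ← integral_smul]
        simp [smul_eq_mul]
      rw [hconst]
      apply setIntegral_mono_on hfnorm_int (hprod_int.const_mul _) measurableSet_Ioi
      intro u hu
      have hu0 : 0 < u := hs0.trans hu
      have hexp : (0:ℝ) < Real.exp (-(r*u)) * u^k :=
        mul_pos (Real.exp_pos _) (pow_pos hu0 _)
      have hGu : G u = Real.exp (-(r*u)) * u^k * ‖f u‖ := by
        rw [hGdef]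
        simp only
        rw [norm_smul, Real.norm_eq_abs, abs_of_pos hexp]
      have hφu : φ u = (u^k)⁻¹ := by
        rw [hφdef]
        simp only
        rw [Real.rpow_neg hu0.le, Real.rpow_natCast]
      have hfu : ‖f u‖ = Real.exp (r*u) * (φ u * G u) := by
        rw [hGu, hφu, Real.exp_neg]
        field_simp
      rw [hfu]
      have hes : Real.exp (r*u) ≤ Real.exp (r*s) :=
        Real.exp_le_exp.2 (mul_le_mul_of_nonpos_left hu.le hr)
      apply mul_le_mul_of_nonneg_right hes
      exact mul_nonneg (Real.rpow_nonneg hu0.le _) (hGnonneg u)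
    have holder : ∫ u in Ioi s, φ u * G u ≤
        (∫ u in Ioi s, φ u ^ (2:ℝ)) ^ (1/(2:ℝ)) * (∫ u in Ioi s, G u ^ (2:ℝ)) ^ (1/(2:ℝ)) := by
      apply integral_mul_le_Lp_mul_Lq_of_nonneg Real.HolderConjugate.two_two
      · filter_upwards [ae_restrict_mem measurableSet_Ioi] with u hu
        exact Real.rpow_nonneg (hs0.trans hu).le _
      · exact Filter.Eventually.of_forall hGnonneg
      · simpa [ENNReal.ofReal_ofNat] using hφmem
      · simpa [ENNReal.ofReal_ofNat] using hGs
    have hfac1 : (∫ u in Ioi s, φ u ^ (2:ℝ)) ^ (1/(2:ℝ)) ≤ s ^ ((-(k:ℝ) * 2 + 1) * (1/2)) := by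
      have hcongr : ∫ u in Ioi s, φ u ^ (2:ℝ) = ∫ u in Ioi s, u ^ (-(k:ℝ) * 2) := by
        apply setIntegral_congr_fun measurableSet_Ioi
        intro u hu
        rw [hφdef]
        simp only
        rw [← Real.rpow_mul (hs0.trans hu).le]
      have hlt : -(k:ℝ) * 2 < -1 := by linarith
      have hval : ∫ u in Ioi s, u ^ (-(k:ℝ) * 2) = -s ^ (-(k:ℝ)*2 + 1) / (-(k:ℝ)*2 + 1) :=
        integral_Ioi_rpow_of_lt hlt hs0
      have hX0 : (0:ℝ) ≤ s ^ (-(k:ℝ)*2 + 1) := Real.rpow_nonneg hs0.le _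
      have hintle : ∫ u in Ioi s, φ u ^ (2:ℝ) ≤ s ^ (-(k:ℝ)*2 + 1) := by
        rw [hcongr, hval]
        have he : -s ^ (-(k:ℝ)*2 + 1) / (-(k:ℝ)*2 + 1) =
            s ^ (-(k:ℝ)*2 + 1) / (-(-(k:ℝ)*2 + 1)) := by
          rw [neg_div, div_neg]
        rw [he]
        exact div_le_self hX0 (by linarith)
      have hint0 : (0:ℝ) ≤ ∫ u in Ioi s, φ u ^ (2:ℝ) := by
        apply setIntegral_nonneg measurableSet_Ioi
        intro u hu
        exact Real.rpow_nonneg (Real.rpow_nonneg (hs0.trans hu).le _) _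
      calc (∫ u in Ioi s, φ u ^ (2:ℝ)) ^ (1/(2:ℝ))
          ≤ (s ^ (-(k:ℝ)*2 + 1)) ^ (1/(2:ℝ)) :=
            Real.rpow_le_rpow hint0 hintle (by norm_num)
        _ = s ^ ((-(k:ℝ) * 2 + 1) * (1/2)) := by
            rw [← Real.rpow_mul hs0.le]
    have hfac2 : (∫ u in Ioi s, G u ^ (2:ℝ)) ^ (1/(2:ℝ)) ≤ A := by
      apply Real.rpow_le_rpow
      · apply setIntegral_nonneg measurableSet_Ioi
        intro u _; exact Real.rpow_nonneg (hGnonneg u) _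
      · apply setIntegral_mono_set hGsq
        · exact Filter.Eventually.of_forall (fun u => Real.rpow_nonneg (hGnonneg u) _)
        · exact HasSubset.Subset.eventuallyLE (Ioi_subset_Ioi hs.le)
      · norm_num
    -- combine
    have hintnn : (0:ℝ) ≤ ∫ u in Ioi s, φ u * G u := by
      apply setIntegral_nonneg measurableSet_Ioi
      intro u hu
      exact mul_nonneg (Real.rpow_nonneg (hs0.trans hu).le _) (hGnonneg u)
    have hWnn : (0:ℝ) < Real.exp (-(r*s)) * s^m :=
      mul_pos (Real.exp_pos _) (pow_pos hs0 _)
    have hchain : ‖-∫ u in Ioi s, f u‖ ≤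
        Real.exp (r*s) * (s ^ ((-(k:ℝ) * 2 + 1) * (1/2)) * A) := by
      refine step1.trans (step2.trans ?_)
      apply mul_le_mul_of_nonneg_left _ (Real.exp_pos _).le
      refine holder.trans ?_
      exact mul_le_mul hfac1 hfac2 (Real.rpow_nonneg (setIntegral_nonneg measurableSet_Ioi
        (fun u _ => Real.rpow_nonneg (hGnonneg u) _)) _) (Real.rpow_nonneg hs0.le _)
    rw [norm_smul, Real.norm_eq_abs, abs_of_pos hWnn]
    calc (Real.exp (-(r*s)) * s^m) * ‖-∫ u in Ioi s, f u‖
        ≤ (Real.exp (-(r*s)) * s^m) * (Real.exp (r*s) * (s ^ ((-(k:ℝ) * 2 + 1) * (1/2)) * A)) :=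
          mul_le_mul_of_nonneg_left hchain hWnn.le
      _ = A * (s^m * s ^ ((-(k:ℝ) * 2 + 1) * (1/2))) := by
          rw [Real.exp_neg]
          field_simp
      _ = A * s ^ (-(3:ℝ)/2) := by
          congr 1
          rw [← Real.rpow_natCast s m, ← Real.rpow_add hs0]
          congr 1
          rw [hk]
          push_cast
          ring
  -- conclude via domination
  have hD : MemLp (fun s : ℝ => A * s ^ (-(3:ℝ)/2)) 2 (volume.restrict (Ioi T)) :=
    (memLp_rpow hT0 (by norm_num)).const_mul A
  apply MemLp.of_le hD
  · apply ContinuousOn.aestronglyMeasurable ?_ measurableSet_Ioi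
    apply ContinuousOn.fun_smul ?_ hIfc
    apply ContinuousOn.mul
    · exact (Real.continuous_exp.comp (continuous_const.mul continuous_id).neg).continuousOn
    · exact (continuous_pow m).continuousOn
  · filter_upwards [ae_restrict_mem measurableSet_Ioi] with s hs
    have hs0 : (0:ℝ) < s := hT0.trans hs
    refine (hbound s hs).trans ?_
    rw [Real.norm_eq_abs]
    exact le_abs_self _

theorem stmt2 (T r : ℝ) (hT : 1 < T) (hr : r ≤ 0) (f : ℝ → ℂ) (hf : Sspace T r f) :
    (∀ s ∈ Set.Ioi T, IntegrableOn f (Set.Ioi s)) ∧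
    ContDiffOn ℝ (⊤ : ℕ∞) (fun s => -∫ u in Set.Ioi s, f u) (Set.Ioi T) ∧
    (∀ s ∈ Set.Ioi T, HasDerivAt (fun s => -∫ u in Set.Ioi s, f u) (f s) s) ∧
    Sspace T r (fun s => -∫ u in Set.Ioi s, f u) := by
  obtain ⟨hfs, hfL⟩ := hf
  have hT0 : (0:ℝ) < T := lt_trans one_pos hT
  have key0 : ∀ k : ℕ, MemLp (fun s => (Real.exp (-(r*s)) * s^k) • f s) 2
      (volume.restrict (Ioi T)) := by
    intro k
    simpa [iteratedDerivWithin_zero] using hfL 0 k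
  have hfc : ContinuousOn f (Ioi T) := hfs.continuousOn
  -- integrability on Ioi T
  have hφ2 : MemLp (fun s : ℝ => Real.exp (r*s) * ((s^2)⁻¹ : ℝ)) 2 (volume.restrict (Ioi T)) := by
    have hψ := memLp_rpow (a := -2) hT0 (by norm_num)
    apply MemLp.of_le hψ
    · apply ContinuousOn.aestronglyMeasurable ?_ measurableSet_Ioi
      exact ((Real.continuous_exp.comp (continuous_const.mul continuous_id)).continuousOn.mul
        (((continuous_pow 2).continuousOn).inv₀
          (fun x hx => pow_ne_zero 2 (ne_of_gt (hT0.trans hx)))))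
    · filter_upwards [ae_restrict_mem measurableSet_Ioi] with x hx
      have hx0 : (0:ℝ) < x := hT0.trans hx
      have h1 : Real.exp (r*x) ≤ 1 :=
        Real.exp_le_one_iff.2 (mul_nonpos_iff.2 (Or.inr ⟨hr, hx0.le⟩))
      have h2 : x ^ (-2 : ℝ) = (x^2)⁻¹ := by
        rw [show (-2:ℝ) = -((2:ℕ):ℝ) by norm_num, Real.rpow_neg hx0.le, Real.rpow_natCast]
      rw [Real.norm_eq_abs, Real.norm_eq_abs, abs_of_nonneg
        (mul_nonneg (Real.exp_pos _).le (inv_nonneg.2 (sq_nonneg x))),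
        abs_of_nonneg (Real.rpow_nonneg hx0.le _), h2]
      exact mul_le_of_le_one_left (inv_nonneg.2 (sq_nonneg x)) h1
  have hint : IntegrableOn f (Ioi T) := by
    have hsm : MemLp ((fun s : ℝ => Real.exp (r*s) * ((s^2)⁻¹ : ℝ)) •
        (fun s => (Real.exp (-(r*s)) * s^2) • f s)) 1 (volume.restrict (Ioi T)) := by
      apply MemLp.smul (key0 2) hφ2
    rw [IntegrableOn, ← memLp_one_iff_integrable]
    apply hsm.ae_eq
    filter_upwards [ae_restrict_mem measurableSet_Ioi] with x hx
    have hx0 : (0:ℝ) < x := hT0.trans hx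
    show (Real.exp (r*x) * ((x^2)⁻¹:ℝ)) • ((Real.exp (-(r*x)) * x^2) • f x) = f x
    rw [smul_smul]
    have hone : (Real.exp (r*x) * ((x^2)⁻¹:ℝ)) * (Real.exp (-(r*x)) * x^2) = 1 := by
      rw [Real.exp_neg]
      field_simp
    rw [hone, one_smul]
  have htail : ∀ s ∈ Ioi T, IntegrableOn f (Ioi s) :=
    fun s hs => hint.mono_set (Ioi_subset_Ioi (le_of_lt hs))
  -- representation and derivative
  have hrep : ∀ x ∈ Ioi T, (-∫ u in Ioi x, f u) = (∫ u in T..x, f u) - ∫ u in Ioi T, f u := by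
    intro x hx
    have hsplit : ∫ u in Ioi T, f u = (∫ u in Ioc T x, f u) + ∫ u in Ioi x, f u := by
      rw [← setIntegral_union (Ioc_disjoint_Ioi le_rfl) measurableSet_Ioi
        (hint.mono_set Ioc_subset_Ioi_self) (htail x hx), Ioc_union_Ioi_eq_Ioi (le_of_lt hx)]
    rw [intervalIntegral.integral_of_le (le_of_lt hx), hsplit]
    ring
  have hderivAt : ∀ s ∈ Ioi T, HasDerivAt (fun s => -∫ u in Ioi s, f u) (f s) s := by
    intro s hs
    have hii : IntervalIntegrable f volume T s :=
      (intervalIntegrable_iff_integrableOn_Ioc_of_le (le_of_lt hs)).2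
        (hint.mono_set Ioc_subset_Ioi_self)
    have hmeas : StronglyMeasurableAtFilter f (nhds s) volume :=
      hfc.stronglyMeasurableAtFilter isOpen_Ioi s hs
    have hca : ContinuousAt f s := hfc.continuousAt (isOpen_Ioi.mem_nhds hs)
    have hg := (intervalIntegral.integral_hasDerivAt_right hii hmeas hca).sub_const
      (∫ u in Ioi T, f u)
    apply HasDerivAt.congr_of_eventuallyEq hg
    filter_upwards [isOpen_Ioi.mem_nhds hs] with x hx
    exact hrep x hx
  -- smoothness
  have hsmooth : ContDiffOn ℝ (⊤ : ℕ∞) (fun s => -∫ u in Ioi s, f u) (Ioi T) :=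
    (contDiffOn_infty_iff_deriv_of_isOpen isOpen_Ioi).2
      ⟨fun x hx => (hderivAt x hx).differentiableAt.differentiableWithinAt,
        hfs.congr (fun x hx => (hderivAt x hx).deriv)⟩
  have hdereq : EqOn (derivWithin (fun s => -∫ u in Ioi s, f u) (Ioi T)) f (Ioi T) := by
    intro x hx
    rw [derivWithin_of_isOpen isOpen_Ioi hx]
    exact (hderivAt x hx).deriv
  refine ⟨htail, hsmooth, hderivAt, hsmooth, ?_⟩
  intro l m
  match l with
  | 0 =>
    have h0 := memLp_zero_case T r hT hr f key0 hint hsmooth.continuousOn m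
    simpa [iteratedDerivWithin_zero] using h0
  | (l+1) =>
    apply (hfL l m).ae_eq
    filter_upwards [ae_restrict_mem measurableSet_Ioi] with x hx
    have h1 : iteratedDerivWithin (l+1) (fun s => -∫ u in Ioi s, f u) (Ioi T) x
        = iteratedDerivWithin l (derivWithin (fun s => -∫ u in Ioi s, f u) (Ioi T)) (Ioi T) x :=
      congrFun iteratedDerivWithin_succ' x
    have h2 : iteratedDerivWithin l (derivWithin (fun s => -∫ u in Ioi s, f u) (Ioi T)) (Ioi T) x
        = iteratedDerivWithin l f (Ioi T) x :=
      iteratedDerivWithin_congr hdereq hx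
    rw [h1, h2]
end

section
/- Let T > 1 and r > 0 be real numbers, and let f ∈ S_r. Then the function F defined on (T, ∞) by the oriented integral F(s) = ∫_{T+1}^s f(u) du is smooth, satisfies F' = f on (T, ∞), and belongs to S_r. -/
open MeasureTheory Set
open scoped NNReal ENNReal

lemma pow_le_factorial_mul_exp (k : ℕ) (x : ℝ) (hx : 0 ≤ x) :
    x ^ k ≤ k.factorial * Real.exp x := by
  have h1 : x ^ k / k.factorial ≤ Real.exp x := by
    calc x ^ k / k.factorial ≤ ∑ i ∈ Finset.range (k + 1), x ^ i / i.factorial := by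
          refine Finset.single_le_sum (f := fun i => x ^ i / (i.factorial : ℝ)) ?_ ?_
          · intro i _
            positivity
          · simp [Finset.mem_range]
      _ ≤ Real.exp x := Real.sum_le_exp_of_nonneg hx _
  have hk : (0:ℝ) < k.factorial := by positivity
  rw [div_le_iff₀ hk] at h1
  linarith [h1]

lemma psi_deriv (r : ℝ) (k : ℕ) (u : ℝ) (hu : u ≠ 0) :
    HasDerivAt (fun u : ℝ => (Real.exp (r * u) / u ^ k) ^ 2)
      (2 * (Real.exp (r * u) / u ^ k) *
        ((r * Real.exp (r * u) * u ^ k - Real.exp (r * u) * (k * u ^ (k - 1))) / (u ^ k) ^ 2))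
      u := by
  have h0 : HasDerivAt (fun u : ℝ => r * u) r u := by
    simpa using (hasDerivAt_id u).const_mul r
  have h1 : HasDerivAt (fun u : ℝ => Real.exp (r * u)) (Real.exp (r * u) * r) u := h0.exp
  have h2 : HasDerivAt (fun u : ℝ => u ^ k) ((k : ℝ) * u ^ (k - 1)) u := hasDerivAt_pow k u
  have h3 := (h1.fun_div h2 (pow_ne_zero k hu)).fun_pow 2
  refine h3.congr_deriv ?_
  ring

lemma psi_step (r : ℝ) (hr : 0 < r) (k : ℕ) (u : ℝ) (hu1 : 1 ≤ u) (hu2 : 2 * k / r ≤ u) :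
    (Real.exp (r * u) / u ^ k) ^ 2 ≤
      (2 * (Real.exp (r * u) / u ^ k) *
        ((r * Real.exp (r * u) * u ^ k - Real.exp (r * u) * (k * u ^ (k - 1))) / (u ^ k) ^ 2)) / r := by
  have hu0 : (0:ℝ) < u := lt_of_lt_of_le one_pos hu1
  have he : (0:ℝ) < Real.exp (r * u) := Real.exp_pos _
  have hpk : (0:ℝ) < u ^ k := pow_pos hu0 k
  set e := Real.exp (r * u) with he'
  set B' : ℝ := (r * e * u ^ k - e * (k * u ^ (k - 1))) / (u ^ k) ^ 2 with hB'
  have hkey : r * (e / u ^ k) ≤ 2 * B' := by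
    rw [hB', ← mul_div_assoc, ← mul_div_assoc, div_le_div_iff₀ hpk (by positivity)]
    rcases k with _ | k'
    · simp only [pow_zero, Nat.cast_zero, Nat.zero_sub, zero_mul, mul_zero, sub_zero]
      nlinarith
    · have h2k : 2 * ((k' : ℝ) + 1) ≤ r * u := by
        rw [div_le_iff₀ hr] at hu2
        push_cast at hu2
        linarith
      have hd : (0:ℝ) < u ^ k' := pow_pos hu0 k'
      have hps : u ^ (k' + 1) = u ^ k' * u := pow_succ u k'
      have hsub : (k' + 1) - 1 = k' := rfl
      rw [hsub, hps]
      push_cast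
      nlinarith [mul_le_mul_of_nonneg_right h2k
        (le_of_lt (mul_pos he (mul_pos (mul_pos hd hd) hu0)))]
  have hB2 : e / u ^ k ≤ 2 * B' / r := by
    rw [le_div_iff₀ hr]
    linarith [hkey]
  have hBpos : 0 < e / u ^ k := div_pos he hpk
  calc (e / u ^ k) ^ 2 = (e / u ^ k) * (e / u ^ k) := sq (e / u ^ k)
    _ ≤ (e / u ^ k) * (2 * B' / r) := mul_le_mul_of_nonneg_left hB2 hBpos.le
    _ = 2 * (e / u ^ k) * B' / r := by ring

lemma psi_integral_bound (T r : ℝ) (hT : 1 < T) (hr : 0 < r) (k : ℕ) :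
    ∃ C1 : ℝ, 0 ≤ C1 ∧ ∀ s : ℝ, T + 1 ≤ s →
      ∫ u in (T+1)..s, (Real.exp (r * u) / u ^ k) ^ 2 ≤
        C1 + (Real.exp (r * s) / s ^ k) ^ 2 / r := by
  set ψ : ℝ → ℝ := fun u => (Real.exp (r * u) / u ^ k) ^ 2 with hψ
  set ψ' : ℝ → ℝ := fun u => 2 * (Real.exp (r * u) / u ^ k) *
    ((r * Real.exp (r * u) * u ^ k - Real.exp (r * u) * (k * u ^ (k - 1))) / (u ^ k) ^ 2) with hψ'
  set u0 : ℝ := max (T + 1) (2 * k / r) with hu0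
  have hTu0 : T + 1 ≤ u0 := le_max_left _ _
  have hu0pos : (0:ℝ) < u0 := lt_of_lt_of_le (by linarith) hTu0
  have hexpcont : ContinuousOn (fun u : ℝ => Real.exp (r * u)) (Ioi (0:ℝ)) :=
    (Real.continuous_exp.comp (continuous_const.mul continuous_id)).continuousOn
  have hpowne : ∀ u : ℝ, u ∈ Ioi (0:ℝ) → (u:ℝ) ^ k ≠ 0 := fun u hu => pow_ne_zero _ (ne_of_gt hu)
  have hcont : ContinuousOn ψ (Ioi (0:ℝ)) :=
    (hexpcont.div ((continuous_pow k).continuousOn) hpowne).pow 2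
  have hcont' : ContinuousOn ψ' (Ioi (0:ℝ)) := by
    apply ContinuousOn.mul
    · exact (continuous_const.continuousOn.mul
        (hexpcont.div ((continuous_pow k).continuousOn) hpowne))
    · apply ContinuousOn.div
      · exact ((continuous_const.continuousOn.mul hexpcont).mul
          ((continuous_pow k).continuousOn)).sub
          (hexpcont.mul (continuous_const.continuousOn.mul
            ((continuous_pow (k-1)).continuousOn)))
      · exact ((continuous_pow k).pow 2).continuousOn
      · intro u hu
        exact pow_ne_zero _ (pow_ne_zero _ (ne_of_gt hu))
  have hInt : ∀ a b : ℝ, T + 1 ≤ a → a ≤ b → IntervalIntegrable ψ volume a b := by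
    intro a b ha hab
    apply (hcont.mono ?_).intervalIntegrable
    rw [uIcc_of_le hab]
    intro u hu
    exact lt_of_lt_of_le (by linarith) (le_trans ha hu.1)
  refine ⟨u0 * Real.exp (r * u0) ^ 2, by positivity, ?_⟩
  have hsmall : ∀ a b : ℝ, T + 1 ≤ a → a ≤ b → b ≤ u0 →
      ∫ u in a..b, ψ u ≤ u0 * Real.exp (r * u0) ^ 2 := by
    intro a b ha hab hb
    have h1 : ∫ u in a..b, ψ u ≤ ∫ u in a..b, Real.exp (r * u0) ^ 2 := by
      apply intervalIntegral.integral_mono_on hab (hInt a b ha hab) intervalIntegrable_const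
      intro u hu
      have hu1 : (1:ℝ) ≤ u := le_trans (by linarith) hu.1
      have hupos : (0:ℝ) < u := lt_of_lt_of_le one_pos hu1
      have hek : (1:ℝ) ≤ u ^ k := by
        have := pow_le_pow_left₀ (by norm_num : (0:ℝ) ≤ 1) hu1 k
        simpa using this
      have hb1 : Real.exp (r * u) / u ^ k ≤ Real.exp (r * u0) := by
        calc Real.exp (r * u) / u ^ k ≤ Real.exp (r * u) / 1 :=
              div_le_div_of_nonneg_left (le_of_lt (Real.exp_pos _)) one_pos hek
          _ = Real.exp (r * u) := div_one _
          _ ≤ Real.exp (r * u0) := Real.exp_le_exp.mpr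
              (mul_le_mul_of_nonneg_left (le_trans hu.2 hb) hr.le)
      have hb0 : (0:ℝ) ≤ Real.exp (r * u) / u ^ k := by positivity
      calc ψ u = (Real.exp (r * u) / u ^ k) ^ 2 := rfl
        _ ≤ Real.exp (r * u0) ^ 2 := pow_le_pow_left₀ hb0 hb1 2
    rw [intervalIntegral.integral_const, smul_eq_mul] at h1
    have : (b - a) * Real.exp (r * u0) ^ 2 ≤ u0 * Real.exp (r * u0) ^ 2 := by
      apply mul_le_mul_of_nonneg_right _ (by positivity)
      linarith
    linarith
  intro s hs
  rcases le_total s u0 with h | h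
  · have := hsmall (T+1) s le_rfl hs h
    have h0 : (0:ℝ) ≤ ψ s / r := by positivity
    calc ∫ u in (T+1)..s, ψ u ≤ u0 * Real.exp (r * u0) ^ 2 := this
      _ ≤ u0 * Real.exp (r * u0) ^ 2 + ψ s / r := by linarith
  · have hInt1 := hInt (T+1) u0 le_rfl hTu0
    have hInt2 := hInt u0 s hTu0 h
    have hsplit := intervalIntegral.integral_add_adjacent_intervals hInt1 hInt2
    have hInt' : IntervalIntegrable ψ' volume u0 s := by
      apply (hcont'.mono ?_).intervalIntegrable
      rw [uIcc_of_le h]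
      intro u hu
      exact lt_of_lt_of_le hu0pos hu.1
    have hftc : ∫ u in u0..s, ψ' u = ψ s - ψ u0 := by
      apply intervalIntegral.integral_eq_sub_of_hasDerivAt
      · intro u hu
        rw [uIcc_of_le h] at hu
        have hupos : (0:ℝ) < u := lt_of_lt_of_le hu0pos hu.1
        exact psi_deriv r k u (ne_of_gt hupos)
      · exact hInt'
    have h2 : ∫ u in u0..s, ψ u ≤ ∫ u in u0..s, ψ' u / r := by
      apply intervalIntegral.integral_mono_on h hInt2 (hInt'.div_const r)
      intro u hu
      have hu1 : (1:ℝ) ≤ u := by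
        have := le_trans hTu0 hu.1
        linarith
      have hu2 : 2 * k / r ≤ u := le_trans (le_max_right _ _) hu.1
      exact psi_step r hr k u hu1 hu2
    have h3 : ∫ u in u0..s, ψ' u / r = (ψ s - ψ u0) / r := by
      rw [intervalIntegral.integral_div, hftc]
    have h1 := hsmall (T+1) u0 le_rfl hTu0 le_rfl
    have hψu0 : (0:ℝ) ≤ ψ u0 := by positivity
    have hgoal : ∫ u in (T+1)..s, ψ u =
        (∫ u in (T+1)..u0, ψ u) + ∫ u in u0..s, ψ u := hsplit.symm
    rw [hgoal]
    have : (ψ s - ψ u0) / r ≤ ψ s / r := by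
      apply div_le_div_of_nonneg_right _ hr.le
      linarith
    linarith

lemma exp_neg_mul_pow_le (r : ℝ) (hr : 0 < r) (k : ℕ) (s : ℝ) (hs : 0 ≤ s) :
    Real.exp (-(r * s)) * s ^ k ≤ k.factorial / r ^ k := by
  have h := pow_le_factorial_mul_exp k (r * s) (by positivity)
  rw [mul_pow] at h
  have hee : Real.exp (-(r * s)) * Real.exp (r * s) = 1 := by
    rw [← Real.exp_add]; simp
  have h2 : Real.exp (-(r * s)) * (r ^ k * s ^ k) ≤ (k.factorial : ℝ) := by
    calc Real.exp (-(r * s)) * (r ^ k * s ^ k)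
        ≤ Real.exp (-(r * s)) * ((k.factorial : ℝ) * Real.exp (r * s)) :=
          mul_le_mul_of_nonneg_left h (Real.exp_nonneg _)
      _ = (k.factorial : ℝ) * (Real.exp (-(r * s)) * Real.exp (r * s)) := by ring
      _ = (k.factorial : ℝ) := by rw [hee]; ring
  rw [le_div_iff₀ (pow_pos hr k)]
  nlinarith [h2]

set_option maxHeartbeats 2000000 in
theorem stmt3 (T r : ℝ) (hT : 1 < T) (hr : 0 < r) (f : ℝ → ℂ) (hf : Sspace T r f) :
    ContDiffOn ℝ (⊤ : ℕ∞) (fun s => ∫ u in (T + 1)..s, f u) (Set.Ioi T) ∧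
    (∀ s ∈ Set.Ioi T, HasDerivAt (fun s => ∫ u in (T + 1)..s, f u) (f s) s) ∧
    Sspace T r (fun s => ∫ u in (T + 1)..s, f u) := by
  obtain ⟨hsm, hL2⟩ := hf
  have hSopen : IsOpen (Set.Ioi T) := isOpen_Ioi
  have hSud : UniqueDiffOn ℝ (Set.Ioi T) := uniqueDiffOn_Ioi T
  have hcont : ContinuousOn f (Set.Ioi T) := hsm.continuousOn
  set F : ℝ → ℂ := fun s => ∫ u in (T + 1)..s, f u with hFdef
  have hIntf : ∀ a b : ℝ, T < a → T < b → IntervalIntegrable f volume a b := by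
    intro a b ha hb
    apply (hcont.mono ?_).intervalIntegrable
    intro u hu
    exact lt_of_lt_of_le (lt_min ha hb) hu.1
  have hderiv : ∀ s ∈ Set.Ioi T, HasDerivAt F (f s) s := by
    intro s hs
    exact intervalIntegral.integral_hasDerivAt_right (hIntf (T+1) s (by linarith) hs)
      (hcont.stronglyMeasurableAtFilter hSopen s hs)
      (hcont.continuousAt (hSopen.mem_nhds hs))
  have hFsm : ContDiffOn ℝ (⊤ : ℕ∞) F (Set.Ioi T) :=
    (contDiffOn_infty_iff_derivWithin hSud).2
      ⟨fun s hs => (hderiv s hs).differentiableAt.differentiableWithinAt,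
        hsm.congr (fun s hs => (hderiv s hs).hasDerivWithinAt.derivWithin (hSud s hs))⟩
  refine ⟨hFsm, hderiv, hFsm, ?_⟩
  intro l m
  rcases l with _ | l
  · -- the case l = 0
    simp only [iteratedDerivWithin_zero]
    set k : ℕ := m + 1 with hk
    set w : ℝ → ℝ := fun u => Real.exp (-(r * u)) * u ^ k with hw
    set Φ : ℝ → ℝ := fun u => ‖w u • f u‖ ^ 2 with hΦ
    have hΦint : IntegrableOn Φ (Set.Ioi T) volume := by
      have h := hL2 0 k
      simp only [iteratedDerivWithin_zero] at h
      exact (memLp_two_iff_integrable_sq_norm h.aestronglyMeasurable).mp h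
    set K : ℝ := ∫ u in Set.Ioi T, Φ u with hK
    have hΦnn : ∀ u, 0 ≤ Φ u := fun u => by positivity
    have hK0 : 0 ≤ K := setIntegral_nonneg measurableSet_Ioi (fun u _ => hΦnn u)
    have hsubIoc : Set.Ioc T (T+1) ⊆ Set.Ioi T := fun u hu => hu.1
    have hfm : AEStronglyMeasurable f (volume.restrict (Set.Ioc T (T+1))) :=
      (hcont.mono hsubIoc).aestronglyMeasurable measurableSet_Ioc
    have hintIoc : IntegrableOn f (Set.Ioc T (T+1)) volume := by
      have h := hL2 0 0
      simp only [iteratedDerivWithin_zero, pow_zero, mul_one] at h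
      have h2 : MemLp (fun s => Real.exp (-(r * s)) • f s) 2
          (volume.restrict (Set.Ioc T (T+1))) :=
        h.mono_measure (Measure.restrict_mono hsubIoc le_rfl)
      haveI : Fact (volume (Set.Ioc T (T+1)) < ⊤) := ⟨by simp⟩
      have h1 : MemLp (fun s => Real.exp (-(r * s)) • f s) 1
          (volume.restrict (Set.Ioc T (T+1))) :=
        h2.mono_exponent (by norm_num)
      have hint := memLp_one_iff_integrable.mp h1
      apply Integrable.mono' (hint.norm.const_mul (Real.exp (r * (T+1)))) hfm
      filter_upwards [ae_restrict_mem measurableSet_Ioc] with u hu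
      rw [norm_smul, Real.norm_eq_abs, abs_of_pos (Real.exp_pos _)]
      have h3 : (1:ℝ) ≤ Real.exp (r * (T+1)) * Real.exp (-(r * u)) := by
        rw [← Real.exp_add]
        apply Real.one_le_exp
        nlinarith [hu.2]
      calc ‖f u‖ = 1 * ‖f u‖ := (one_mul _).symm
        _ ≤ (Real.exp (r * (T+1)) * Real.exp (-(r * u))) * ‖f u‖ :=
            mul_le_mul_of_nonneg_right h3 (norm_nonneg _)
        _ = Real.exp (r * (T+1)) * (Real.exp (-(r * u)) * ‖f u‖) := by ring
    have hintnorm : IntegrableOn (fun u => ‖f u‖) (Set.Ioc T (T+1)) volume := hintIoc.norm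
    set C0 : ℝ := ∫ u in Set.Ioc T (T+1), ‖f u‖ with hC0def
    have hC00 : 0 ≤ C0 := setIntegral_nonneg measurableSet_Ioc (fun u _ => norm_nonneg _)
    have hsmallF : ∀ s, T < s → s ≤ T + 1 → ‖F s‖ ≤ C0 := by
      intro s hs1 hs2
      have h1 : F s = -∫ u in s..(T+1), f u := intervalIntegral.integral_symm s (T+1)
      rw [h1, norm_neg]
      calc ‖∫ u in s..(T+1), f u‖ ≤ ∫ u in s..(T+1), ‖f u‖ :=
            intervalIntegral.norm_integral_le_integral_norm hs2
        _ = ∫ u in Set.Ioc s (T+1), ‖f u‖ := intervalIntegral.integral_of_le hs2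
        _ ≤ C0 := by
            apply setIntegral_mono_set hintnorm
            · filter_upwards with u using norm_nonneg _
            · exact HasSubset.Subset.eventuallyLE
                (fun u hu => ⟨lt_trans hs1 hu.1, hu.2⟩)
    obtain ⟨C1, hC10, hC1⟩ := psi_integral_bound T r hT hr k
    set Mk : ℝ := k.factorial / r ^ k with hMkdef
    have hMk0 : 0 ≤ Mk := by positivity
    set E : ℝ := K / 2 + 1 / (2 * r) with hE
    have hE0 : 0 ≤ E := by
      rw [hE]
      have h1 : 0 ≤ 1 / (2 * r) := by positivity
      linarith
    set A : ℝ := C0 + C1 * Mk / 2 with hA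
    have hCM0 : 0 ≤ C1 * Mk / 2 := by positivity
    have hA0 : 0 ≤ A := by rw [hA]; linarith
    set B : ℝ → ℝ := fun s => Real.exp (r * s) / s ^ k with hB
    have hBpos : ∀ s : ℝ, 0 < s → 0 < B s := fun s hs => div_pos (Real.exp_pos _) (pow_pos hs k)
    have hboundF : ∀ s ∈ Set.Ioi T, ‖F s‖ ≤ A + E * B s := by
      intro s hs
      rw [Set.mem_Ioi] at hs
      have hs0 : (0:ℝ) < s := by linarith
      have hBs := hBpos s hs0
      rcases le_total s (T+1) with hcase | hcase
      · have h1 := hsmallF s hs hcase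
        have h2 : C0 ≤ A := by rw [hA]; linarith
        nlinarith [mul_nonneg hE0 hBs.le]
      · have hnorm1 : ‖F s‖ ≤ ∫ u in Set.Ioc (T+1) s, ‖f u‖ := by
          calc ‖F s‖ ≤ ∫ u in (T+1)..s, ‖f u‖ :=
                intervalIntegral.norm_integral_le_integral_norm hcase
            _ = _ := intervalIntegral.integral_of_le hcase
        set ψ : ℝ → ℝ := fun u => (Real.exp (r * u) / u ^ k) ^ 2 with hψ
        have hsub2 : Set.Ioc (T+1) s ⊆ Set.Ioi T := fun u hu => by
          simp only [Set.mem_Ioi]; linarith [hu.1]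
        have hsub3 : Set.Ioc (T+1) s ⊆ Set.Icc (T+1) s := Set.Ioc_subset_Icc_self
        have hΦint2 : IntegrableOn Φ (Set.Ioc (T+1) s) volume := hΦint.mono_set hsub2
        have hψcont : ContinuousOn ψ (Set.Icc (T+1) s) := by
          apply ContinuousOn.pow
          apply ContinuousOn.div
          · exact (Real.continuous_exp.comp (continuous_const.mul continuous_id)).continuousOn
          · exact (continuous_pow k).continuousOn
          · intro u hu
            have hu0 : (0:ℝ) < u := by have := hu.1; linarith
            exact pow_ne_zero _ (ne_of_gt hu0)
        have hψint : IntegrableOn ψ (Set.Ioc (T+1) s) volume :=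
          (hψcont.integrableOn_Icc).mono_set hsub3
        have hfnint : IntegrableOn (fun u => ‖f u‖) (Set.Ioc (T+1) s) volume := by
          apply IntegrableOn.mono_set ?_ hsub3
          apply ContinuousOn.integrableOn_Icc
          apply ContinuousOn.norm
          apply hcont.mono
          intro u hu
          have := hu.1
          simp only [Set.mem_Ioi]
          linarith
        have hpoint : ∀ u ∈ Set.Ioc (T+1) s,
            ‖f u‖ ≤ B s / 2 * Φ u + 1 / (2 * B s) * ψ u := by
          intro u hu
          have hu0 : (0:ℝ) < u := by linarith [hu.1]
          have hwu : (0:ℝ) < w u := by rw [hw]; positivity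
          have hbu : (w u)⁻¹ = Real.exp (r * u) / u ^ k := by
            simp only [hw]
            rw [mul_inv, Real.exp_neg, inv_inv, div_eq_mul_inv]
          have hfu : ‖f u‖ = ‖w u • f u‖ * (w u)⁻¹ := by
            rw [norm_smul, Real.norm_eq_abs, abs_of_pos hwu]
            field_simp
          rw [hfu]
          have hΦu : Φ u = ‖w u • f u‖ ^ 2 := rfl
          have hψu : ψ u = ((w u)⁻¹) ^ 2 := by rw [hbu]
          rw [hΦu, hψu]
          set a := ‖w u • f u‖ with ha'
          set b := (w u)⁻¹ with hb'
          have hb0 : 0 < b := inv_pos.mpr hwu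
          rw [← mul_le_mul_iff_of_pos_right (show (0:ℝ) < 2 * B s by positivity)]
          have hexp : (B s / 2 * a ^ 2 + 1 / (2 * B s) * b ^ 2) * (2 * B s)
              = (B s)^2 * a^2 + b^2 := by
            field_simp
          rw [hexp]
          nlinarith [sq_nonneg (B s * a - b)]
        have hint1 : ∫ u in Set.Ioc (T+1) s, ‖f u‖
            ≤ ∫ u in Set.Ioc (T+1) s, (B s / 2 * Φ u + 1 / (2 * B s) * ψ u) :=
          setIntegral_mono_on hfnint ((hΦint2.const_mul _).add (hψint.const_mul _))
            measurableSet_Ioc hpoint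
        have hsplit : ∫ u in Set.Ioc (T+1) s, (B s / 2 * Φ u + 1 / (2 * B s) * ψ u)
            = (B s / 2 * ∫ u in Set.Ioc (T+1) s, Φ u)
              + (1 / (2 * B s) * ∫ u in Set.Ioc (T+1) s, ψ u) := by
          rw [integral_add (hΦint2.const_mul _) (hψint.const_mul _),
            integral_const_mul, integral_const_mul]
        have hΦle : ∫ u in Set.Ioc (T+1) s, Φ u ≤ K := by
          apply setIntegral_mono_set hΦint
          · filter_upwards with u using hΦnn u
          · exact HasSubset.Subset.eventuallyLE hsub2
        have hψle : ∫ u in Set.Ioc (T+1) s, ψ u ≤ C1 + (B s)^2 / r := by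
          have h5 := hC1 s hcase
          rw [intervalIntegral.integral_of_le hcase] at h5
          exact h5
        have hMks : (B s)⁻¹ ≤ Mk := by
          have h6 : (B s)⁻¹ = Real.exp (-(r * s)) * s ^ k := by
            rw [hB, Real.exp_neg]
            field_simp
          rw [h6, hMkdef]
          exact exp_neg_mul_pow_le r hr k s hs0.le
        have hK2 : B s / 2 * ∫ u in Set.Ioc (T+1) s, Φ u ≤ B s / 2 * K :=
          mul_le_mul_of_nonneg_left hΦle (by positivity)
        have hψ2 : 1 / (2 * B s) * ∫ u in Set.Ioc (T+1) s, ψ u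
            ≤ 1 / (2 * B s) * (C1 + (B s)^2 / r) :=
          mul_le_mul_of_nonneg_left hψle (by positivity)
        have hfin : 1 / (2 * B s) * (C1 + (B s)^2 / r) = C1 * (B s)⁻¹ / 2 + B s / (2 * r) := by
          field_simp
        have hC1Mk : C1 * (B s)⁻¹ / 2 ≤ C1 * Mk / 2 := by nlinarith
        have hEB : B s / 2 * K + (C1 * (B s)⁻¹ / 2 + B s / (2 * r)) ≤ A + E * B s := by
          rw [hA, hE]
          ring_nf
          ring_nf at hC1Mk
          nlinarith [hC00]
        calc ‖F s‖ ≤ _ := hnorm1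
          _ ≤ _ := hint1
          _ = _ := hsplit
          _ ≤ B s / 2 * K + (C1 * (B s)⁻¹ / 2 + B s / (2 * r)) := by
              rw [← hfin]; exact add_le_add hK2 hψ2
          _ ≤ A + E * B s := hEB
    -- measurability of the target
    have hFcont : ContinuousOn F (Set.Ioi T) := fun s hs =>
      ((hderiv s hs).continuousAt).continuousWithinAt
    have hwcont : Continuous (fun s : ℝ => Real.exp (-(r * s)) * s ^ m) :=
      (Real.continuous_exp.comp (continuous_const.mul continuous_id).neg).mul (continuous_pow m)
    have hGmeas : AEStronglyMeasurable (fun s : ℝ => (Real.exp (-(r * s)) * s ^ m) • F s)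
        (volume.restrict (Set.Ioi T)) :=
      (hwcont.continuousOn.smul hFcont).aestronglyMeasurable measurableSet_Ioi
    -- Memℒp of the dominating function
    have hmem1 : MemLp (fun s : ℝ => Real.exp (-(r * s)) * s ^ m) 2
        (volume.restrict (Set.Ioi T)) := by
      rw [memLp_two_iff_integrable_sq hwcont.aestronglyMeasurable.restrict]
      have hint : Integrable (fun s : ℝ => ((2*m).factorial / r ^ (2*m)) * Real.exp (-(r * s)))
          (volume.restrict (Set.Ioi T)) := by
        apply Integrable.const_mul
        have h7 := exp_neg_integrableOn_Ioi T hr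
        simp only [neg_mul] at h7
        exact h7
      apply Integrable.mono' hint ((hwcont.pow 2).aestronglyMeasurable.restrict)
      filter_upwards [ae_restrict_mem measurableSet_Ioi] with s hs
      rw [Set.mem_Ioi] at hs
      have hs0 : (0:ℝ) < s := by linarith
      have h8 : (Real.exp (-(r * s)) * s ^ m) ^ 2
          = Real.exp (-(r * s)) * (Real.exp (-(r * s)) * s ^ (2*m)) := by
        rw [mul_pow, sq (Real.exp (-(r * s))), pow_mul']
        ring
      have h9 := exp_neg_mul_pow_le r hr (2*m) s hs0.le
      have h10 : (0:ℝ) ≤ Real.exp (-(r * s)) := Real.exp_nonneg _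
      show ‖(Real.exp (-(r * s)) * s ^ m) ^ 2‖ ≤ _
      rw [Real.norm_eq_abs, abs_of_nonneg (by positivity)]
      rw [h8]
      calc Real.exp (-(r * s)) * (Real.exp (-(r * s)) * s ^ (2*m))
          ≤ Real.exp (-(r * s)) * ((2*m).factorial / r ^ (2*m)) :=
            mul_le_mul_of_nonneg_left h9 h10
        _ = (2*m).factorial / r ^ (2*m) * Real.exp (-(r * s)) := by ring
    have hmem2 : MemLp (fun s : ℝ => s⁻¹) 2 (volume.restrict (Set.Ioi T)) := by
      have hmeas2 : AEStronglyMeasurable (fun s : ℝ => s⁻¹)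
          (volume.restrict (Set.Ioi T)) := measurable_inv.aestronglyMeasurable
      rw [memLp_two_iff_integrable_sq hmeas2]
      have h11 := integrableOn_Ioi_rpow_of_lt (show (-2:ℝ) < -1 by norm_num)
        (show (0:ℝ) < T by linarith)
      apply h11.congr_fun ?_ measurableSet_Ioi
      intro x hx
      rw [Set.mem_Ioi] at hx
      have hx0 : (0:ℝ) < x := by linarith
      show x ^ (-2:ℝ) = (x⁻¹) ^ 2
      rw [show (-2:ℝ) = -(2:ℝ) by norm_num, Real.rpow_neg hx0.le,
        show (2:ℝ) = ((2:ℕ):ℝ) by norm_num, Real.rpow_natCast, inv_pow]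
    have hdom : MemLp (fun s : ℝ => A * (Real.exp (-(r * s)) * s ^ m) + E * s⁻¹) 2
        (volume.restrict (Set.Ioi T)) := by
      have := (hmem1.const_mul A).add (hmem2.const_mul E)
      exact this
    apply MemLp.of_le hdom hGmeas
    filter_upwards [ae_restrict_mem measurableSet_Ioi] with s hs
    have hs' : T < s := hs
    have hs0 : (0:ℝ) < s := by linarith
    have hwpos : (0:ℝ) < Real.exp (-(r * s)) * s ^ m := by positivity
    have h12 : ‖(Real.exp (-(r * s)) * s ^ m) • F s‖
        = (Real.exp (-(r * s)) * s ^ m) * ‖F s‖ := by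
      rw [norm_smul, Real.norm_eq_abs, abs_of_pos hwpos]
    have h13 : Real.exp (-(r * s)) * s ^ m * B s = s⁻¹ := by
      simp only [hB, hk]
      rw [Real.exp_neg, pow_succ]
      field_simp
    calc ‖(Real.exp (-(r * s)) * s ^ m) • F s‖
        = (Real.exp (-(r * s)) * s ^ m) * ‖F s‖ := h12
      _ ≤ (Real.exp (-(r * s)) * s ^ m) * (A + E * B s) :=
          mul_le_mul_of_nonneg_left (hboundF s hs) hwpos.le
      _ = A * (Real.exp (-(r * s)) * s ^ m) + E * (Real.exp (-(r * s)) * s ^ m * B s) := by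
          ring
      _ = A * (Real.exp (-(r * s)) * s ^ m) + E * s⁻¹ := by rw [h13]
      _ ≤ ‖A * (Real.exp (-(r * s)) * s ^ m) + E * s⁻¹‖ := by
          rw [Real.norm_eq_abs]; exact le_abs_self _
  · -- the case l + 1
    have hdw : Set.EqOn (derivWithin F (Set.Ioi T)) f (Set.Ioi T) := by
      intro s hs
      exact (hderiv s hs).hasDerivWithinAt.derivWithin (hSud s hs)
    have hEq : Set.EqOn (iteratedDerivWithin (l+1) F (Set.Ioi T))
        (iteratedDerivWithin l f (Set.Ioi T)) (Set.Ioi T) := by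
      intro s hs
      rw [iteratedDerivWithin_succ']
      exact (iteratedDerivWithin_congr hdw) hs
    apply (hL2 l m).ae_eq
    filter_upwards [ae_restrict_mem measurableSet_Ioi] with s hs
    rw [hEq hs]
end

section
/- Let T > 1 and r be real numbers, and let f : (T, ∞) → ℂ be a smooth function such that for every pair of natural numbers l, m the function s ↦ e^{-r s} s^m f^{(l)}(s) belongs to L²((T, ∞)). Then for every pair of natural numbers l, m the function s ↦ e^{-r s} s^m f^{(l)}(s) is bounded on (T, ∞). -/
open MeasureTheory Set

lemma boundedA {T : ℝ} {u F : ℝ → ℂ}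
    (hderiv : ∀ s ∈ Ioi T, HasDerivAt u (F s) s)
    (hu : MemLp u 2 (volume.restrict (Ioi T)))
    (hF : MemLp F 2 (volume.restrict (Ioi T))) :
    ∃ C : ℝ, ∀ s ∈ Ioi T, ‖u s‖ ≤ C := by
  classical
  set μ := volume.restrict (Ioi T) with hμ
  set D : ℝ → ℝ := fun s => (F s).re * (u s).re + (u s).re * (F s).re
    + ((F s).im * (u s).im + (u s).im * (F s).im) with hD
  have hφderiv : ∀ s ∈ Ioi T, HasDerivAt (fun t => ‖u t‖ ^ 2) (D s) s := by
    intro s hs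
    have h1 : HasDerivAt (fun t => (u t).re) ((F s).re) s :=
      (Complex.reCLM.hasFDerivAt.comp_hasDerivAt s (hderiv s hs))
    have h2 : HasDerivAt (fun t => (u t).im) ((F s).im) s :=
      (Complex.imCLM.hasFDerivAt.comp_hasDerivAt s (hderiv s hs))
    have := ((h1.mul h1).add (h2.mul h2))
    refine HasDerivAt.congr_deriv (this.congr_of_eventuallyEq ?_) rfl
    filter_upwards with t
    rw [Pi.add_apply, Pi.mul_apply, Pi.mul_apply, ← Complex.normSq_apply, Complex.sq_norm]
  have husq : Integrable (fun s => ‖u s‖ ^ 2) μ := by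
    have := hu.integrable_norm_rpow (by norm_num) (by norm_num)
    simpa [Real.rpow_natCast] using this
  have hFsq : Integrable (fun s => ‖F s‖ ^ 2) μ := by
    have := hF.integrable_norm_rpow (by norm_num) (by norm_num)
    simpa [Real.rpow_natCast] using this
  have hDle : ∀ s, ‖D s‖ ≤ ‖u s‖ ^ 2 + ‖F s‖ ^ 2 := by
    intro s
    have hre : |(u s).re| ≤ ‖u s‖ := Complex.abs_re_le_norm _
    have him : |(u s).im| ≤ ‖u s‖ := Complex.abs_im_le_norm _
    have hreF : |(F s).re| ≤ ‖F s‖ := Complex.abs_re_le_norm _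
    have himF : |(F s).im| ≤ ‖F s‖ := Complex.abs_im_le_norm _
    have h1 : |D s| ≤ |(F s).re| * |(u s).re| + |(u s).re| * |(F s).re|
        + (|(F s).im| * |(u s).im| + |(u s).im| * |(F s).im|) := by
      simp only [hD]
      refine (abs_add_le _ _).trans (add_le_add ((abs_add_le _ _).trans ?_)
        ((abs_add_le _ _).trans ?_)) <;> rw [abs_mul, abs_mul]
    have e1 : ‖u s‖ ^ 2 = (u s).re ^ 2 + (u s).im ^ 2 := by
      rw [Complex.sq_norm, Complex.normSq_apply]; ring
    have e2 : ‖F s‖ ^ 2 = (F s).re ^ 2 + (F s).im ^ 2 := by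
      rw [Complex.sq_norm, Complex.normSq_apply]; ring
    rw [Real.norm_eq_abs]
    nlinarith [sq_nonneg (|(u s).re| - |(F s).re|), sq_nonneg (|(u s).im| - |(F s).im|),
      sq_abs (u s).re, sq_abs (u s).im, sq_abs (F s).re, sq_abs (F s).im]
  have hDmeas : AEStronglyMeasurable D μ := by
    have hum := hu.aestronglyMeasurable
    have hFm := hF.aestronglyMeasurable
    have hure := Complex.continuous_re.comp_aestronglyMeasurable hum
    have huim := Complex.continuous_im.comp_aestronglyMeasurable hum
    have hFre := Complex.continuous_re.comp_aestronglyMeasurable hFm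
    have hFim := Complex.continuous_im.comp_aestronglyMeasurable hFm
    exact ((hFre.mul hure).add (hure.mul hFre)).add ((hFim.mul huim).add (huim.mul hFim))
  have hDint : Integrable D μ :=
    (husq.add hFsq).mono' hDmeas (Filter.Eventually.of_forall hDle)
  -- FTC
  set a : ℝ := T + 1 with ha
  have haT : a ∈ Ioi T := by simp [ha]
  have key : ∀ s ∈ Ioi T, ‖u s‖ ^ 2 ≤ ‖u a‖ ^ 2 + ∫ t, ‖D t‖ ∂μ := by
    intro s hs
    have hsub : uIcc a s ⊆ Ioi T := fun x hx =>
      lt_of_lt_of_le (lt_min haT hs) hx.1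
    have hDIoi : IntegrableOn D (Ioi T) volume := hDint
    have hint : IntervalIntegrable D volume a s :=
      (hDIoi.mono_set hsub).intervalIntegrable
    have hftc : ∫ t in a..s, D t = ‖u s‖ ^ 2 - ‖u a‖ ^ 2 :=
      intervalIntegral.integral_eq_sub_of_hasDerivAt
        (fun x hx => hφderiv x (hsub hx)) hint
    have hbd : |∫ t in a..s, D t| ≤ ∫ t, ‖D t‖ ∂μ := by
      refine (intervalIntegral.norm_integral_le_integral_norm_uIoc (f := D)).trans ?_
      rw [hμ]
      refine setIntegral_mono_set hDIoi.norm
        (Filter.Eventually.of_forall fun x => norm_nonneg _) ?_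
      exact Filter.Eventually.of_forall fun x hx => hsub (uIoc_subset_uIcc hx)
    rw [hftc] at hbd
    have := abs_le.mp hbd
    linarith [this.1, this.2]
  refine ⟨Real.sqrt (‖u a‖ ^ 2 + ∫ t, ‖D t‖ ∂μ), fun s hs => ?_⟩
  have h2 := key s hs
  calc ‖u s‖ = Real.sqrt (‖u s‖ ^ 2) := by rw [Real.sqrt_sq (norm_nonneg _)]
    _ ≤ _ := Real.sqrt_le_sqrt h2

theorem stmt4 (T r : ℝ) (hT : 1 < T) (f : ℝ → ℂ)
    (hf : ContDiffOn ℝ (⊤ : ℕ∞) f (Set.Ioi T))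
    (hL2 : ∀ l m : ℕ,
      MemLp (fun s : ℝ => (Real.exp (-(r * s)) * s ^ m) • iteratedDerivWithin l f (Set.Ioi T) s)
        2 (volume.restrict (Set.Ioi T))) :
    ∀ l m : ℕ, ∃ C : ℝ, ∀ s ∈ Set.Ioi T,
      ‖(Real.exp (-(r * s)) * s ^ m) • iteratedDerivWithin l f (Set.Ioi T) s‖ ≤ C := by
  intro l m
  set h : ℝ → ℂ := iteratedDerivWithin l f (Set.Ioi T) with hh
  set h2 : ℝ → ℂ := iteratedDerivWithin (l + 1) f (Set.Ioi T) with hh2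
  set F : ℝ → ℂ := fun s =>
    ((Real.exp (-(r * s)) * (-r)) * s ^ m + Real.exp (-(r * s)) * (↑m * s ^ (m - 1))) • h s
      + (Real.exp (-(r * s)) * s ^ m) • h2 s with hF
  have hdiff : DifferentiableOn ℝ h (Set.Ioi T) := by
    exact hf.differentiableOn_iteratedDerivWithin
      (by exact_mod_cast ENat.coe_lt_top l) (uniqueDiffOn_Ioi T)
  have hderivh : ∀ s ∈ Set.Ioi T, HasDerivAt h (h2 s) s := by
    intro s hs
    have hd : DifferentiableAt ℝ h s :=
      (hdiff s hs).differentiableAt (isOpen_Ioi.mem_nhds hs)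
    have : h2 s = deriv h s := by
      rw [hh2, iteratedDerivWithin_succ, hh,
        derivWithin_of_isOpen isOpen_Ioi hs]
    rw [this]
    exact hd.hasDerivAt
  have hderivu : ∀ s ∈ Set.Ioi T,
      HasDerivAt (fun s : ℝ => (Real.exp (-(r * s)) * s ^ m) • h s) (F s) s := by
    intro s hs
    have hlin : HasDerivAt (fun s : ℝ => -(r * s)) (-r) s := by
      exact (((hasDerivAt_id' s).const_mul r).neg).congr_deriv (by ring)
    have hexp : HasDerivAt (fun s : ℝ => Real.exp (-(r * s)))
        (Real.exp (-(r * s)) * (-r)) s := hlin.exp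
    have hw : HasDerivAt (fun s : ℝ => Real.exp (-(r * s)) * s ^ m)
        ((Real.exp (-(r * s)) * (-r)) * s ^ m + Real.exp (-(r * s)) * (↑m * s ^ (m - 1))) s :=
      hexp.mul (hasDerivAt_pow m s)
    have := hw.smul (hderivh s hs)
    rw [hF]
    exact this.congr_deriv (add_comm _ _)
  have hFmem : MemLp F 2 (volume.restrict (Set.Ioi T)) := by
    have heq : F = fun s =>
        ((-r) • ((Real.exp (-(r * s)) * s ^ m) • h s)
          + (m : ℝ) • ((Real.exp (-(r * s)) * s ^ (m - 1)) • h s))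
          + (Real.exp (-(r * s)) * s ^ m) • h2 s := by
      funext s
      simp only [hF, smul_smul, ← add_smul]
      congr 2
      ring
    rw [heq]
    exact (((hL2 l m).const_smul (-r)).add ((hL2 l (m - 1)).const_smul (m : ℝ))).add
      (hL2 (l + 1) m)
  exact boundedA hderivu (hL2 l m) hFmem
end

section
/- Let λ ∈ ℝ and let c ∈ ℂ with c ≠ -iλ. Then the multiplication operator m_c restricts to a linear bijection from D'_λ onto D'_λ, i.e. for every tempered distribution S supported in {λ} there is a unique tempered distribution T supported in {λ} with m_c T = S. -/
open SchwartzMap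

/-- A tempered distribution `T` on `ℝ` is *supported in `{l}`* if `T φ = 0` for every Schwartz
function `φ` vanishing on some open neighbourhood of `l`. -/
def SuppInPt (l : ℝ) (T : 𝓢(ℝ, ℂ) →L[ℂ] ℂ) : Prop :=
  ∀ φ : 𝓢(ℝ, ℂ), (∃ U ∈ nhds l, ∀ x ∈ U, φ x = 0) → T φ = 0

/-- Multiplication of a Schwartz function by the coordinate `x`. -/
noncomputable def mulX : 𝓢(ℝ, ℂ) →L[ℝ] 𝓢(ℝ, ℂ) :=
  SchwartzMap.bilinLeftCLM (ContinuousLinearMap.mul ℝ ℂ) Complex.ofRealCLM.hasTemperateGrowth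

/-- Multiplication of a Schwartz function by the polynomial `x ↦ i x + c`. -/
noncomputable def mulPoly (c : ℂ) (φ : 𝓢(ℝ, ℂ)) : 𝓢(ℝ, ℂ) :=
  Complex.I • mulX φ + c • φ

@[simp] lemma mulPoly_apply (c : ℂ) (φ : 𝓢(ℝ, ℂ)) (x : ℝ) :
    mulPoly c φ x = (Complex.I * x + c) * φ x := by
  have h : mulX φ x = φ x * (x : ℂ) := rfl
  simp [mulPoly, h]
  ring

/-- A smooth compactly supported function has temperate growth. -/
lemma hasTemperateGrowth_of_compactSupport {θ : ℝ → ℂ} (hsm : ContDiff ℝ ((⊤:ℕ∞)) θ)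
    (hcs : HasCompactSupport θ) : Function.HasTemperateGrowth θ := by
  refine ⟨hsm, fun n => ?_⟩
  obtain ⟨C, hC⟩ := (hcs.iteratedFDeriv n).exists_bound_of_continuous
    (hsm.continuous_iteratedFDeriv (by exact_mod_cast le_top))
  exact ⟨0, C, fun x => by simpa using hC x⟩

theorem stmt9 (l : ℝ) (c : ℂ) (hc : c ≠ -(Complex.I * l)) (S : 𝓢(ℝ, ℂ) →L[ℂ] ℂ)
    (hS : SuppInPt l S) :
    ∃! T : 𝓢(ℝ, ℂ) →L[ℂ] ℂ, SuppInPt l T ∧ ∀ φ : 𝓢(ℝ, ℂ), T (mulPoly c φ) = S φ := by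
  set p : ℝ → ℂ := fun x => Complex.I * x + c with hp
  have hpl : p l ≠ 0 := by
    simp only [hp]; intro h
    exact hc (by linear_combination h)
  have hpc : Continuous p := by fun_prop
  -- find ε > 0 such that p ≠ 0 on ball l ε
  obtain ⟨ε, hε, hball⟩ : ∃ ε > 0, ∀ x ∈ Metric.ball l ε, p x ≠ 0 := by
    have : IsOpen (p ⁻¹' {0}ᶜ) := (isOpen_compl_singleton).preimage hpc
    obtain ⟨ε, hε, h⟩ := Metric.isOpen_iff.1 this l hpl
    exact ⟨ε, hε, fun x hx => h hx⟩
  -- bump function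
  set b : ContDiffBump l := ⟨ε/4, ε/2, by positivity, by linarith⟩ with hb
  set θ : ℝ → ℂ := fun x => (b x : ℂ) * (p x)⁻¹ with hθ
  have hbsupp : tsupport (fun x => b x) = Metric.closedBall l (ε/2) := b.tsupport_eq
  have hθsm : ContDiff ℝ ((⊤:ℕ∞)) θ := by
    rw [contDiff_iff_contDiffAt]
    intro x
    by_cases hx : p x ≠ 0
    · have h1 : ContDiffAt ℝ ((⊤:ℕ∞)) (fun y : ℝ => ((b y : ℝ) : ℂ)) x :=
        (Complex.ofRealCLM.contDiff.comp b.contDiff).contDiffAt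
      have h2 : ContDiffAt ℝ ((⊤:ℕ∞)) (fun y : ℝ => (p y)⁻¹) x := by
        apply ContDiffAt.inv _ hx
        exact ((contDiff_const.mul Complex.ofRealCLM.contDiff).add contDiff_const).contDiffAt
      exact h1.mul h2
    · push_neg at hx
      have hxn : x ∉ tsupport (fun x => b x) := by
        rw [hbsupp]
        intro hmem
        exact hball x (Metric.closedBall_subset_ball (by linarith) hmem) hx
      have : θ =ᶠ[nhds x] 0 := by
        filter_upwards [(isClosed_tsupport _).isOpen_compl.mem_nhds hxn] with y hy
        have : b y = 0 := image_eq_zero_of_notMem_tsupport hy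
        simp [hθ, this]
      exact (contDiffAt_const (c := (0:ℂ))).congr_of_eventuallyEq this
  have hθcs : HasCompactSupport θ := by
    apply HasCompactSupport.intro (isCompact_closedBall l (ε/2))
    intro x hx
    have : b x = 0 := by
      have : x ∉ tsupport (fun x => b x) := by rw [hbsupp]; exact hx
      exact image_eq_zero_of_notMem_tsupport this
    simp [hθ, this]
  have hθtg : Function.HasTemperateGrowth θ := hasTemperateGrowth_of_compactSupport hθsm hθcs
  -- multiplication by θ as a CLM on Schwartz space
  set M : 𝓢(ℝ, ℂ) →L[ℝ] 𝓢(ℝ, ℂ) :=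
    SchwartzMap.bilinLeftCLM (ContinuousLinearMap.mul ℝ ℂ) hθtg with hM
  have hMapp : ∀ (φ : 𝓢(ℝ, ℂ)) (x : ℝ), M φ x = φ x * θ x := fun _ _ => rfl
  -- key: p * θ = 1 on ball l (ε/4)
  have hkey : ∀ x ∈ Metric.ball l (ε/4), p x * θ x = 1 := by
    intro x hx
    have h1 : b x = 1 := b.one_of_mem_closedBall (Metric.ball_subset_closedBall hx)
    have h2 : p x ≠ 0 := hball x (Metric.ball_subset_ball (by linarith) hx)
    rw [hθ]; simp only [h1, Complex.ofReal_one, one_mul]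
    exact mul_inv_cancel₀ h2
  -- construct T
  set T : 𝓢(ℝ, ℂ) →L[ℂ] ℂ :=
    { toFun := fun φ => S (M φ)
      map_add' := fun φ ψ => by
        show S (M (φ + ψ)) = S (M φ) + S (M ψ)
        rw [map_add, map_add]
      map_smul' := fun a φ => by
        show S (M (a • φ)) = a • S (M φ)
        have : M (a • φ) = a • M φ := by
          ext x
          simp only [hMapp, SchwartzMap.smul_apply, smul_eq_mul]
          ring
        rw [this, map_smul]
      cont := S.continuous.comp M.continuous } with hT
  have hTapp : ∀ φ, T φ = S (M φ) := fun _ => rfl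
  have hTsupp : SuppInPt l T := by
    intro φ ⟨U, hU, hUz⟩
    rw [hTapp]
    refine hS _ ⟨U, hU, fun x hx => ?_⟩
    rw [hMapp, hUz x hx, zero_mul]
  have hTmul : ∀ φ : 𝓢(ℝ, ℂ), T (mulPoly c φ) = S φ := by
    intro φ
    rw [hTapp]
    have : S (M (mulPoly c φ)) - S φ = S (M (mulPoly c φ) - φ) := by rw [map_sub]
    have hz : S (M (mulPoly c φ) - φ) = 0 := by
      refine hS _ ⟨Metric.ball l (ε/4), Metric.ball_mem_nhds l (by positivity), fun x hx => ?_⟩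
      have := hkey x hx
      simp only [SchwartzMap.sub_apply, hMapp, mulPoly_apply]
      rw [show Complex.I * x + c = p x from rfl]
      rw [mul_comm (p x) (φ x), mul_assoc, this, mul_one, sub_self]
    rw [map_sub] at hz
    exact sub_eq_zero.1 hz
  refine ⟨T, ⟨hTsupp, hTmul⟩, ?_⟩
  rintro T' ⟨hT'supp, hT'mul⟩
  ext φ
  rw [hTapp]
  have hz : T' (φ - mulPoly c (M φ)) = 0 := by
    refine hT'supp _ ⟨Metric.ball l (ε/4), Metric.ball_mem_nhds l (by positivity), fun x hx => ?_⟩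
    simp only [SchwartzMap.sub_apply, mulPoly_apply, hMapp]
    rw [show Complex.I * x + c = p x from rfl, ← mul_assoc, mul_comm (p x) (φ x), mul_assoc,
      hkey x hx, mul_one, sub_self]
  rw [map_sub, sub_eq_zero] at hz
  rw [hz, hT'mul]
end

section
/- Let λ ∈ ℝ and let c = -iλ. Then the multiplication operator m_c maps D'_λ onto D'_λ, and its kernel on D'_λ is the one-dimensional space ℂ·δ_λ: a tempered distribution T supported in {λ} satisfies m_c T = 0 if and only if T is a scalar multiple of δ_λ. -/
open SchwartzMap

/-!
Write `m` for multiplication by `i x - i l = i (x - l)`. Fix a Schwartz function `χ` equal to `1`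
near `l` and put `D ψ = χ · dslope ψ l`, where `dslope ψ l x = (ψ x - ψ l) / (x - l)`. The formula
`dslope ψ l x = ∫₀¹ ψ'(l + t (x - l)) dt` bounds every derivative of `dslope ψ l` by a derivative of
`ψ`, so `D` is continuous on Schwartz space. Near `l` we have `D (m φ) = i φ` and
`m (D ψ) = i (ψ - ψ l)`. A distribution supported in `{l}` only sees germs at `l`, so the first
identity makes `-i · S ∘ D` a preimage of `S` under `m`, and the second gives `T ψ = ψ(l) · T χ`
whenever `T ∘ m = 0`.
-/

open MeasureTheory Metric Filter Topology
open scoped ContDiff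

section SegmentMoment

variable {E : Type*} [NormedAddCommGroup E] [NormedSpace ℝ E] {f : ℝ → E} {a : ℝ}

noncomputable def segmentMoment (f : ℝ → E) (a : ℝ) (n : ℕ) (x : ℝ) : E :=
  ∫ t in (0 : ℝ)..1, t ^ n • f (a + t * (x - a))

lemma norm_segmentMoment_le {M : ℝ} (hM : ∀ y, ‖f y‖ ≤ M) (n : ℕ) (x : ℝ) :
    ‖segmentMoment f a n x‖ ≤ M := by
  have h := intervalIntegral.norm_integral_le_of_norm_le_const (a := (0 : ℝ)) (b := 1)
    (f := fun t => t ^ n • f (a + t * (x - a))) (C := M) fun t ht => by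
      rw [Set.uIoc_of_le zero_le_one] at ht
      rw [norm_smul, Real.norm_of_nonneg (pow_nonneg ht.1.le n)]
      exact (mul_le_of_le_one_left (norm_nonneg _) (pow_le_one₀ ht.1.le ht.2)).trans (hM _)
  simpa [segmentMoment] using h

lemma hasDerivAt_segmentMoment [CompleteSpace E] (hf : ContDiff ℝ 1 f) (n : ℕ) (x₀ : ℝ) :
    HasDerivAt (segmentMoment f a n) (segmentMoment (deriv f) a (n + 1) x₀) x₀ := by
  set r := |x₀ - a| + 1
  obtain ⟨C, hC⟩ : ∃ C, ∀ y ∈ closedBall a r, ‖deriv f y‖ ≤ C :=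
    (isCompact_closedBall a r).exists_bound_of_continuousOn
      (hf.continuous_deriv le_rfl).continuousOn
  have hcont : ∀ (g : ℝ → E) (m : ℕ), Continuous g → ∀ x,
      Continuous fun t : ℝ => t ^ m • g (a + t * (x - a)) := fun g m hg x => by fun_prop
  have hmem : ∀ t ∈ Set.Icc (0 : ℝ) 1, ∀ x ∈ ball x₀ 1, a + t * (x - a) ∈ closedBall a r := by
    intro t ht x hx
    refine (convex_closedBall a r).add_smul_sub_mem (mem_closedBall_self (by positivity)) ?_ ht
    simp only [mem_closedBall, mem_ball, Real.dist_eq] at hx ⊢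
    have := abs_sub_abs_le_abs_sub (x - a) (x₀ - a)
    rw [sub_sub_sub_cancel_right] at this
    linarith
  refine (intervalIntegral.hasDerivAt_integral_of_dominated_loc_of_deriv_le
    (F' := fun x t => t ^ (n + 1) • deriv f (a + t * (x - a))) (bound := fun _ => C)
    (ball_mem_nhds x₀ one_pos)
    (Eventually.of_forall fun x => (hcont f n hf.continuous x).aestronglyMeasurable.restrict)
    ((hcont f n hf.continuous x₀).intervalIntegrable 0 1)
    ((hcont _ _ (hf.continuous_deriv le_rfl) x₀).aestronglyMeasurable.restrict)
    (Eventually.of_forall fun t ht x hx => ?_) intervalIntegrable_const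
    (Eventually.of_forall fun t _ x _ => ?_)).2
  · rw [Set.uIoc_of_le zero_le_one] at ht
    rw [norm_smul, Real.norm_of_nonneg (pow_nonneg ht.1.le _)]
    exact (mul_le_of_le_one_left (norm_nonneg _) (pow_le_one₀ ht.1.le ht.2)).trans
      (hC _ (hmem t ⟨ht.1.le, ht.2⟩ x hx))
  · have hline : HasDerivAt (fun y : ℝ => a + t * (y - a)) t x := by
      simpa using (((hasDerivAt_id x).sub_const a).const_mul t).const_add a
    have := ((hf.differentiable one_ne_zero _).hasDerivAt.scomp x hline).const_smul (t ^ n)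
    rwa [smul_smul, ← pow_succ] at this

lemma ContDiff.iteratedDeriv (hf : ContDiff ℝ ∞ f) (n : ℕ) : ContDiff ℝ ∞ (iteratedDeriv n f) := by
  rw [iteratedDeriv_eq_iterate]
  exact hf.iterate_deriv n

end SegmentMoment

section Dslope

variable {E : Type*} [NormedAddCommGroup E] [NormedSpace ℝ E] [CompleteSpace E]
  {f : ℝ → E} {a : ℝ}

lemma dslope_eq_segmentMoment (hf : ContDiff ℝ 1 f) : dslope f a = segmentMoment (deriv f) a 0 := by
  ext x
  rcases eq_or_ne x a with rfl | hxa
  · simp [segmentMoment]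
  refine smul_right_injective E (sub_ne_zero.2 hxa) ?_
  have hderiv : ∀ t ∈ Set.uIcc (0 : ℝ) 1,
      HasDerivAt (fun t => f (a + t * (x - a))) ((x - a) • deriv f (a + t * (x - a))) t := by
    intro t _
    have hline : HasDerivAt (fun s : ℝ => a + s * (x - a)) (x - a) t := by
      simpa using ((hasDerivAt_id t).mul_const (x - a)).const_add a
    exact (hf.differentiable one_ne_zero _).hasDerivAt.scomp t hline
  have hcont : Continuous (deriv f) := hf.continuous_deriv le_rfl
  have hftc := intervalIntegral.integral_eq_sub_of_hasDerivAt hderiv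
    ((by fun_prop : Continuous fun t => (x - a) • deriv f (a + t * (x - a))).intervalIntegrable 0 1)
  simp only [one_mul, zero_mul, add_zero, add_sub_cancel, intervalIntegral.integral_smul] at hftc
  simp [segmentMoment, hftc]

lemma iteratedDeriv_dslope (hf : ContDiff ℝ ∞ f) (n : ℕ) :
    iteratedDeriv n (dslope f a) = segmentMoment (iteratedDeriv (n + 1) f) a n := by
  induction n with
  | zero => rw [iteratedDeriv_zero, iteratedDeriv_one, dslope_eq_segmentMoment (hf.of_le (by simp))]
  | succ n ih =>
    ext x
    rw [iteratedDeriv_succ, ih, iteratedDeriv_succ (n := n + 1)]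
    exact (hasDerivAt_segmentMoment ((hf.iteratedDeriv _).of_le (by simp)) n x).deriv

lemma ContDiff.dslope (hf : ContDiff ℝ ∞ f) : ContDiff ℝ ∞ (dslope f a) := by
  refine contDiff_of_differentiable_iteratedDeriv fun m _ x => ?_
  rw [iteratedDeriv_dslope hf]
  exact (hasDerivAt_segmentMoment ((hf.iteratedDeriv _).of_le (by simp)) m x).differentiableAt

lemma norm_iteratedDeriv_dslope_le (hf : ContDiff ℝ ∞ f) {n : ℕ} {M : ℝ}
    (hM : ∀ y, ‖iteratedDeriv (n + 1) f y‖ ≤ M) (x : ℝ) : ‖iteratedDeriv n (dslope f a) x‖ ≤ M := by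
  rw [iteratedDeriv_dslope hf]
  exact norm_segmentMoment_le hM n x

end Dslope

section DslopeAlgebra

variable {𝕜 E : Type*} [NontriviallyNormedField 𝕜] [NormedAddCommGroup E] [NormedSpace 𝕜 E]
  {f g : 𝕜 → E} {a : 𝕜}

lemma dslope_add (hf : DifferentiableAt 𝕜 f a) (hg : DifferentiableAt 𝕜 g a) :
    dslope (f + g) a = dslope f a + dslope g a := by
  ext b
  rcases eq_or_ne b a with rfl | hba
  · simp [deriv_add hf hg]
  · simp [dslope_of_ne _ hba, slope_def_module, smul_sub]
    abel

lemma dslope_const_smul {R : Type*} [Monoid R] [DistribMulAction R E] [SMulCommClass 𝕜 R E]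
    [ContinuousConstSMul R E] (c : R) (hf : DifferentiableAt 𝕜 f a) :
    dslope (c • f) a = c • dslope f a := by
  ext b
  rcases eq_or_ne b a with rfl | hba
  · simp [deriv_const_smul c hf]
  · simp only [dslope_of_ne _ hba, slope_def_module, Pi.smul_apply, smul_sub]
    rw [smul_comm (b - a)⁻¹ c, smul_comm (b - a)⁻¹ c]

lemma dslope_sub_smul_of_continuousAt (hf : ContinuousAt f a) :
    dslope (fun x => (x - a) • f x) a = f := by
  ext b
  rcases eq_or_ne b a with rfl | hba
  · rw [dslope_same]
    refine (hasDerivAt_iff_tendsto_slope.2 ?_).deriv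
    refine (hf.tendsto.mono_left nhdsWithin_le_nhds).congr' ?_
    filter_upwards [self_mem_nhdsWithin] with x hx
    exact (slope_sub_smul _ (Ne.symm hx)).symm
  · exact dslope_sub_smul_of_ne f hba

lemma dslope_eventuallyEq_zero (hf : f =ᶠ[𝓝 a] 0) : dslope f a =ᶠ[𝓝 a] 0 := by
  filter_upwards [hf] with x hx
  rcases eq_or_ne x a with rfl | hxa
  · simp [hf.deriv_eq]
  · simp [dslope_of_ne _ hxa, slope_def_module, hx, hf.self_of_nhds]

end DslopeAlgebra

namespace SchwartzMap

lemma norm_iteratedFDeriv_dslope_le (𝕜 : Type*) {F : Type*} [NormedField 𝕜]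
    [NormedAddCommGroup F] [NormedSpace ℝ F] [CompleteSpace F] [NormedSpace 𝕜 F]
    [SMulCommClass ℝ 𝕜 F] (ψ : 𝓢(ℝ, F)) (a : ℝ) (n : ℕ) (x : ℝ) :
    ‖iteratedFDeriv ℝ n (dslope ψ a) x‖ ≤ SchwartzMap.seminorm 𝕜 0 (n + 1) ψ := by
  rw [norm_iteratedFDeriv_eq_norm_iteratedDeriv]
  refine norm_iteratedDeriv_dslope_le (ψ.smooth ⊤) (fun y => ?_) x
  rw [← norm_iteratedFDeriv_eq_norm_iteratedDeriv]
  exact norm_iteratedFDeriv_le_seminorm 𝕜 ψ (n + 1) y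

variable {E : Type*} [NormedAddCommGroup E] [NormedSpace ℝ E]

lemma norm_pow_mul_norm_iteratedFDeriv_mul_le (χ : 𝓢(E, ℂ)) {h : E → ℂ}
    (hh : ContDiff ℝ ∞ h) {n : ℕ} {M : ℝ} (hM : ∀ j ≤ n, ∀ x, ‖iteratedFDeriv ℝ j h x‖ ≤ M)
    (k : ℕ) (x : E) :
    ‖x‖ ^ k * ‖iteratedFDeriv ℝ n (fun y => χ y * h y) x‖ ≤
      (∑ i ∈ Finset.range (n + 1), n.choose i * SchwartzMap.seminorm ℂ k i χ) * M := by
  calc ‖x‖ ^ k * ‖iteratedFDeriv ℝ n (fun y => χ y * h y) x‖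
      ≤ ‖x‖ ^ k * ∑ i ∈ Finset.range (n + 1),
          n.choose i * ‖iteratedFDeriv ℝ i χ x‖ * ‖iteratedFDeriv ℝ (n - i) h x‖ := by
        gcongr
        exact norm_iteratedFDeriv_mul_le (χ.smooth ⊤) hh x (by exact_mod_cast le_top)
    _ = ∑ i ∈ Finset.range (n + 1),
          n.choose i * (‖x‖ ^ k * ‖iteratedFDeriv ℝ i χ x‖) * ‖iteratedFDeriv ℝ (n - i) h x‖ := by
        rw [Finset.mul_sum]
        congr! 1 with i
        ring
    _ ≤ ∑ i ∈ Finset.range (n + 1), n.choose i * SchwartzMap.seminorm ℂ k i χ * M := by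
        gcongr with i
        · exact le_seminorm ℂ k i χ x
        · exact hM (n - i) (Nat.sub_le n i) x
    _ = _ := (Finset.sum_mul ..).symm

noncomputable def mulDslopeCLM (χ : 𝓢(ℝ, ℂ)) (a : ℝ) : 𝓢(ℝ, ℂ) →L[ℂ] 𝓢(ℝ, ℂ) :=
  mkCLM (fun ψ x => χ x * dslope ψ a x)
    (fun ψ φ x => by
      simp [dslope_add ψ.differentiableAt φ.differentiableAt, mul_add])
    (fun c ψ x => by
      simp [dslope_const_smul c ψ.differentiableAt, mul_left_comm])
    (fun ψ => (χ.smooth ⊤).mul (ψ.smooth ⊤).dslope)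
    (by
      rintro ⟨k, n⟩
      refine ⟨Finset.Iic (0, n + 1),
        ∑ i ∈ Finset.range (n + 1), n.choose i * SchwartzMap.seminorm ℂ k i χ, by positivity,
        fun ψ x => ?_⟩
      have hM : ∀ j ≤ n, ∀ y, ‖iteratedFDeriv ℝ j (dslope ψ a) y‖ ≤
          (Finset.Iic (0, n + 1)).sup (schwartzSeminormFamily ℂ ℝ ℂ) ψ := fun j hj y =>
        (norm_iteratedFDeriv_dslope_le ℂ ψ a j y).trans
          (Seminorm.le_finset_sup_apply (p := schwartzSeminormFamily ℂ ℝ ℂ) (i := (0, j + 1))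
            (Finset.mem_Iic.2 (Prod.mk_le_mk.2 ⟨le_rfl, by omega⟩)))
      exact norm_pow_mul_norm_iteratedFDeriv_mul_le χ (ψ.smooth ⊤).dslope hM k x)

@[simp] lemma mulDslopeCLM_apply (χ : 𝓢(ℝ, ℂ)) (a : ℝ) (ψ : 𝓢(ℝ, ℂ)) (x : ℝ) :
    mulDslopeCLM χ a ψ x = χ x * dslope ψ a x := rfl

end SchwartzMap

section SuppInPt

variable {l : ℝ}

lemma SuppInPt.map_eq_of_eventuallyEq {T : 𝓢(ℝ, ℂ) →L[ℂ] ℂ} (hT : SuppInPt l T)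
    {φ ψ : 𝓢(ℝ, ℂ)} (h : ⇑φ =ᶠ[𝓝 l] ⇑ψ) : T φ = T ψ := by
  rw [← sub_eq_zero, ← map_sub]
  exact hT _ (eventually_iff_exists_mem.1 (h.mono fun x hx => by simp [hx]))

lemma mulPoly_neg_I_mul_eq (φ : 𝓢(ℝ, ℂ)) :
    ⇑(mulPoly (-(Complex.I * l)) φ) = fun x => (x - l) • (Complex.I * φ x) := by
  ext x
  simp only [mulPoly_apply, Complex.real_smul, Complex.ofReal_sub]
  ring

lemma mulDslopeCLM_mulPoly (χ φ : 𝓢(ℝ, ℂ)) (x : ℝ) :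
    mulDslopeCLM χ l (mulPoly (-(Complex.I * l)) φ) x = Complex.I * (χ x * φ x) := by
  have hφ : Continuous fun x => Complex.I * φ x := by fun_prop
  rw [mulDslopeCLM_apply, mulPoly_neg_I_mul_eq, dslope_sub_smul_of_continuousAt hφ.continuousAt]
  ring

lemma mulPoly_mulDslopeCLM (χ ψ : 𝓢(ℝ, ℂ)) (x : ℝ) :
    mulPoly (-(Complex.I * l)) (mulDslopeCLM χ l ψ) x = Complex.I * (χ x * (ψ x - ψ l)) := by
  simp only [mulPoly_neg_I_mul_eq, mulDslopeCLM_apply, ← sub_smul_dslope ψ l x, Complex.real_smul]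
  ring

lemma exists_schwartz_eventuallyEq_one (l : ℝ) : ∃ χ : 𝓢(ℝ, ℂ), ⇑χ =ᶠ[𝓝 l] 1 := by
  let b : ContDiffBump l := ⟨1, 2, one_pos, one_lt_two⟩
  refine ⟨(b.hasCompactSupport.comp_left Complex.ofReal_zero).toSchwartzMap
    (Complex.ofRealCLM.contDiff.comp b.contDiff), ?_⟩
  filter_upwards [b.eventuallyEq_one] with x hx
  change ((b x : ℝ) : ℂ) = 1
  exact_mod_cast hx

theorem exists_suppInPt_comp_mulPoly_eq {S : 𝓢(ℝ, ℂ) →L[ℂ] ℂ} (hS : SuppInPt l S) :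
    ∃ T : 𝓢(ℝ, ℂ) →L[ℂ] ℂ, SuppInPt l T ∧
      ∀ φ : 𝓢(ℝ, ℂ), T (mulPoly (-(Complex.I * l)) φ) = S φ := by
  obtain ⟨χ, hχ⟩ := exists_schwartz_eventuallyEq_one l
  refine ⟨(-Complex.I) • S.comp (mulDslopeCLM χ l), fun φ hφ => ?_, fun φ => ?_⟩
  · have hD : ⇑(mulDslopeCLM χ l φ) =ᶠ[𝓝 l] ⇑(0 : 𝓢(ℝ, ℂ)) := by
      filter_upwards [dslope_eventuallyEq_zero (eventually_iff_exists_mem.2 hφ)] with x hx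
      simp [hx]
    simp [hS.map_eq_of_eventuallyEq hD]
  · have hD : ⇑(mulDslopeCLM χ l (mulPoly (-(Complex.I * l)) φ)) =ᶠ[𝓝 l] ⇑(Complex.I • φ) := by
      filter_upwards [hχ] with x hx
      rw [mulDslopeCLM_mulPoly, hx]
      simp
    simp [hS.map_eq_of_eventuallyEq hD, ← mul_assoc]

theorem SuppInPt.exists_eq_smul_delta {T : 𝓢(ℝ, ℂ) →L[ℂ] ℂ} (hT : SuppInPt l T)
    (hker : ∀ φ : 𝓢(ℝ, ℂ), T (mulPoly (-(Complex.I * l)) φ) = 0) :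
    ∃ a : ℂ, T = a • (BoundedContinuousFunction.evalCLM ℂ l).comp
      (SchwartzMap.toBoundedContinuousFunctionCLM ℂ ℝ ℂ) := by
  obtain ⟨χ, hχ⟩ := exists_schwartz_eventuallyEq_one l
  refine ⟨T χ, ContinuousLinearMap.ext fun ψ => ?_⟩
  have hψ : ⇑ψ =ᶠ[𝓝 l]
      ⇑(ψ l • χ + (-Complex.I) • mulPoly (-(Complex.I * l)) (mulDslopeCLM χ l ψ)) := by
    filter_upwards [hχ] with x hx
    simp only [add_apply, smul_apply, mulPoly_mulDslopeCLM, hx, Pi.one_apply, smul_eq_mul]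
    linear_combination (ψ x - ψ l) * Complex.I_mul_I
  rw [hT.map_eq_of_eventuallyEq hψ, map_add, map_smul, map_smul, hker]
  simp [mul_comm]

end SuppInPt

theorem stmt10 (l : ℝ) :
    (∀ S : 𝓢(ℝ, ℂ) →L[ℂ] ℂ, SuppInPt l S →
      ∃ T : 𝓢(ℝ, ℂ) →L[ℂ] ℂ, SuppInPt l T ∧
        ∀ φ : 𝓢(ℝ, ℂ), T (mulPoly (-(Complex.I * l)) φ) = S φ) ∧
    (∀ T : 𝓢(ℝ, ℂ) →L[ℂ] ℂ, SuppInPt l T →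
      ((∀ φ : 𝓢(ℝ, ℂ), T (mulPoly (-(Complex.I * l)) φ) = 0) ↔
        ∃ a : ℂ, T = a • (BoundedContinuousFunction.evalCLM ℂ l).comp
          (SchwartzMap.toBoundedContinuousFunctionCLM ℂ ℝ ℂ))) := by
  refine ⟨fun S hS => exists_suppInPt_comp_mulPoly_eq hS,
    fun T hT => ⟨hT.exists_eq_smul_delta, ?_⟩⟩
  rintro ⟨a, rfl⟩ φ
  simp
end
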